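/- arXiv:1802.10511 — 11 statements merged into one kernel-verified Lean document; each statement's English description precedes it below -/
import Mathlib

section
/- Let N > k ≥ 2 and let 𝒜 be a family of k-element subsets of {1,…,N} such that the sumsets A + B for unordered pairs {A,B} from 𝒜 are pairwise distinct (i.e., A + B = U + V with A,B,U,V ∈ 𝒜 implies {A,B} = {U,V}). Then |𝒜| ≤ C(N-1, k-1) + N - k. -/
/-!
Group the members of `𝒜` into classes of translates of one another. Distinct classes have
distinct normalized shapes `A - min A`, a `k`-set containing `0` inside `[0, N - 1]`, so there
are at most `C(N-1, k-1)` classes. A member that is not the lowest `B` of its class is `A = t + B`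
for some shift `1 ≤ t ≤ N - k`. Two such members `A = t + B`, `A' = t + B'` with the
same shift satisfy `A + B' = B + A'`, so the Sidon property forces `A = A'`: the shift determines
the member, which leaves at most `N - k` of them.
-/

open Finset Pointwise

def IsSidonSystem {G : Type*} [DecidableEq G] [Add G] (𝒜 : Finset (Finset G)) : Prop :=
  ∀ A ∈ 𝒜, ∀ B ∈ 𝒜, ∀ U ∈ 𝒜, ∀ V ∈ 𝒜, A + B = U + V → ({A, B} : Finset (Finset G)) = {U, V}

namespace IsSidonSystem

variable {G : Type*} [DecidableEq G] [AddCommMonoid G] {𝒜 : Finset (Finset G)}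

lemma eq_of_eq_vadd_of_eq_vadd (h𝒜 : IsSidonSystem 𝒜) {A B A' B' : Finset G}
    (hA : A ∈ 𝒜) (hB : B ∈ 𝒜) (hA' : A' ∈ 𝒜) (hB' : B' ∈ 𝒜) {t : G}
    (hAB : A = t +ᵥ B) (hA'B' : A' = t +ᵥ B') (hne : A ≠ B) : A = A' := by
  have hsum : A + B' = B + A' := by rw [hAB, hA'B', vadd_add_assoc, add_vadd_comm]
  have hmem : A ∈ ({B, A'} : Finset (Finset G)) :=
    h𝒜 A hA B' hB' B hB A' hA' hsum ▸ mem_insert_self A _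
  simpa [hne] using hmem

lemma injOn_of_eq_vadd (h𝒜 : IsSidonSystem 𝒜) (r : Finset G → Finset G) (d : Finset G → G)
    (hr : ∀ A ∈ 𝒜, r A ∈ 𝒜) (hd : ∀ A ∈ 𝒜, A = d A +ᵥ r A) :
    Set.InjOn d (𝒜.filter fun A => A ≠ r A) := by
  intro A hA A' hA' hdA
  rw [coe_filter] at hA hA'
  exact h𝒜.eq_of_eq_vadd_of_eq_vadd hA.1 (hr A hA.1) hA'.1 (hr A' hA'.1) (hd A hA.1)
    (hdA ▸ hd A' hA'.1) hA.2

end IsSidonSystem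

/-- The least element of `A`, with junk value `0` for `A = ∅`. -/
def lowest (A : Finset ℤ) : ℤ := A.min.untopD 0

def shape (A : Finset ℤ) : Finset ℤ := -lowest A +ᵥ A

lemma lowest_eq_min' {A : Finset ℤ} (hA : A.Nonempty) : lowest A = A.min' hA := by
  rw [lowest, ← coe_min' hA]
  rfl

lemma lowest_mem {A : Finset ℤ} (hA : A.Nonempty) : lowest A ∈ A :=
  lowest_eq_min' hA ▸ min'_mem A hA

lemma lowest_le {A : Finset ℤ} {a : ℤ} (ha : a ∈ A) : lowest A ≤ a :=
  lowest_eq_min' ⟨a, ha⟩ ▸ min'_le A a ha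

lemma lowest_vadd_shape (A : Finset ℤ) : lowest A +ᵥ shape A = A :=
  vadd_neg_vadd _ _

lemma card_shape (A : Finset ℤ) : (shape A).card = A.card :=
  card_vadd_finset _ _

lemma zero_mem_shape {A : Finset ℤ} (hA : A.Nonempty) : 0 ∈ shape A :=
  mem_vadd_finset.2 ⟨lowest A, lowest_mem hA, neg_add_cancel _⟩

lemma one_le_lowest {N : ℕ} {A : Finset ℤ} (hsub : A ⊆ Icc 1 (N : ℤ)) (hA : A.Nonempty) :
    1 ≤ lowest A :=
  (mem_Icc.1 (hsub (lowest_mem hA))).1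

lemma lowest_add_card_le {N : ℕ} {A : Finset ℤ} (hsub : A ⊆ Icc 1 (N : ℤ)) (hA : A.Nonempty) :
    lowest A + A.card ≤ N + 1 := by
  have hsub' : A ⊆ Icc (lowest A) N := fun a ha =>
    mem_Icc.2 ⟨lowest_le ha, (mem_Icc.1 (hsub ha)).2⟩
  have hcard := card_le_card hsub'
  have hle : lowest A ≤ N := (mem_Icc.1 (hsub (lowest_mem hA))).2
  rw [Int.card_Icc] at hcard
  omega

lemma shape_erase_zero_subset {N : ℕ} {A : Finset ℤ} (hsub : A ⊆ Icc 1 (N : ℤ)) :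
    (shape A).erase 0 ⊆ Icc 1 ((N : ℤ) - 1) := by
  intro x hx
  obtain ⟨hx0, hx⟩ := mem_erase.1 hx
  obtain ⟨a, ha, rfl⟩ := mem_vadd_finset.1 hx
  have h1 := lowest_le ha
  have h2 := (mem_Icc.1 (hsub ha)).2
  have h3 := one_le_lowest hsub ⟨a, ha⟩
  simp only [vadd_eq_add] at hx0 ⊢
  rw [mem_Icc]
  omega

/-- A shape is `insert 0 T` for a `(k-1)`-subset `T` of `[1, N - 1]`. -/
lemma card_le_choose_of_injOn_shape {N k : ℕ} (𝒮 : Finset (Finset ℤ))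
    (hsub : ∀ A ∈ 𝒮, A ⊆ Icc 1 (N : ℤ)) (hcard : ∀ A ∈ 𝒮, A.card = k) (hk : 1 ≤ k)
    (hinj : Set.InjOn shape 𝒮) : 𝒮.card ≤ (N - 1).choose (k - 1) := by
  have hne : ∀ A ∈ 𝒮, A.Nonempty := fun A hA => card_pos.1 (by rw [hcard A hA]; omega)
  have hmaps : ∀ A ∈ 𝒮, (shape A).erase 0 ∈ (Icc 1 ((N : ℤ) - 1)).powersetCard (k - 1) :=
    fun A hA => mem_powersetCard.2 ⟨shape_erase_zero_subset (hsub A hA),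
      by rw [card_erase_of_mem (zero_mem_shape (hne A hA)), card_shape, hcard A hA]⟩
  have hinj' : Set.InjOn (fun A => (shape A).erase 0) 𝒮 := by
    intro A hA B hB h
    apply hinj hA hB
    rw [← insert_erase (zero_mem_shape (hne A hA)), ← insert_erase (zero_mem_shape (hne B hB))]
    exact congrArg (insert 0) h
  calc 𝒮.card ≤ ((Icc 1 ((N : ℤ) - 1)).powersetCard (k - 1)).card :=
        card_le_card_of_injOn _ hmaps hinj'
    _ = (N - 1).choose (k - 1) := by
        rw [card_powersetCard, Int.card_Icc]
        congr 1
        omega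

def classLowest (𝒜 : Finset (Finset ℤ)) (S : Finset ℤ) : ℤ :=
  lowest ((𝒜.filter (shape · = S)).image lowest)

def classRep (𝒜 : Finset (Finset ℤ)) (A : Finset ℤ) : Finset ℤ :=
  classLowest 𝒜 (shape A) +ᵥ shape A

section classRep

variable {𝒜 : Finset (Finset ℤ)} {A : Finset ℤ}

lemma exists_lowest_eq_classLowest (hA : A ∈ 𝒜) :
    ∃ B ∈ 𝒜, shape B = shape A ∧ lowest B = classLowest 𝒜 (shape A) := by
  have hne : ((𝒜.filter (shape · = shape A)).image lowest).Nonempty :=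
    ⟨lowest A, mem_image_of_mem _ (mem_filter.2 ⟨hA, rfl⟩)⟩
  obtain ⟨B, hB, hBlow⟩ := mem_image.1 (lowest_mem hne)
  exact ⟨B, (mem_filter.1 hB).1, (mem_filter.1 hB).2, hBlow⟩

lemma classLowest_le_lowest (hA : A ∈ 𝒜) : classLowest 𝒜 (shape A) ≤ lowest A :=
  lowest_le (mem_image_of_mem _ (mem_filter.2 ⟨hA, rfl⟩))

lemma classRep_mem (hA : A ∈ 𝒜) : classRep 𝒜 A ∈ 𝒜 := by
  obtain ⟨B, hB, hshape, hlow⟩ := exists_lowest_eq_classLowest hA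
  rwa [classRep, ← hlow, ← hshape, lowest_vadd_shape]

lemma eq_vadd_classRep (A : Finset ℤ) :
    A = (lowest A - classLowest 𝒜 (shape A)) +ᵥ classRep 𝒜 A := by
  rw [classRep, vadd_vadd, sub_add_cancel, lowest_vadd_shape]

end classRep

lemma card_filter_eq_classRep_le {N k : ℕ} {𝒜 : Finset (Finset ℤ)}
    (hsub : ∀ A ∈ 𝒜, A ⊆ Icc 1 (N : ℤ)) (hcard : ∀ A ∈ 𝒜, A.card = k) (hk : 1 ≤ k) :
    (𝒜.filter fun A => A = classRep 𝒜 A).card ≤ (N - 1).choose (k - 1) := by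
  refine card_le_choose_of_injOn_shape _ (fun A hA => hsub A (mem_filter.1 hA).1)
    (fun A hA => hcard A (mem_filter.1 hA).1) hk ?_
  intro A hA B hB h
  rw [coe_filter] at hA hB
  rw [hA.2, hB.2, classRep, classRep, h]

lemma card_filter_ne_classRep_le {N k : ℕ} {𝒜 : Finset (Finset ℤ)} (h𝒜 : IsSidonSystem 𝒜)
    (hsub : ∀ A ∈ 𝒜, A ⊆ Icc 1 (N : ℤ)) (hcard : ∀ A ∈ 𝒜, A.card = k) (hk : 1 ≤ k) :
    (𝒜.filter fun A => ¬A = classRep 𝒜 A).card ≤ N - k := by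
  have hne : ∀ A ∈ 𝒜, A.Nonempty := fun A hA => card_pos.1 (by rw [hcard A hA]; omega)
  have hmaps : ∀ A ∈ 𝒜.filter fun A => ¬A = classRep 𝒜 A,
      lowest A - classLowest 𝒜 (shape A) ∈ Icc 1 ((N : ℤ) - k) := by
    intro A hA
    obtain ⟨hA, hArep⟩ := mem_filter.1 hA
    obtain ⟨B, hB, -, hBlow⟩ := exists_lowest_eq_classLowest hA
    have hshift : lowest A - classLowest 𝒜 (shape A) ≠ 0 := fun h0 =>
      hArep (by simpa [h0] using eq_vadd_classRep (𝒜 := 𝒜) A)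
    have h1 := classLowest_le_lowest hA
    have h2 := one_le_lowest (hsub B hB) (hne B hB)
    have h3 := lowest_add_card_le (hsub A hA) (hne A hA)
    rw [hcard A hA] at h3
    rw [mem_Icc]
    omega
  have hinj := h𝒜.injOn_of_eq_vadd (classRep 𝒜) (fun A => lowest A - classLowest 𝒜 (shape A))
    (fun _ => classRep_mem) (fun A _ => eq_vadd_classRep A)
  calc (𝒜.filter fun A => ¬A = classRep 𝒜 A).card ≤ (Icc 1 ((N : ℤ) - k)).card :=
        card_le_card_of_injOn _ hmaps hinj
    _ = N - k := by rw [Int.card_Icc]; omega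

theorem sidon_system_upper_bound (N k : ℕ) (hk : 2 ≤ k) (hkN : k < N)
    (𝒜 : Finset (Finset ℤ))
    (hsub : ∀ A ∈ 𝒜, A ⊆ Finset.Icc (1 : ℤ) N)
    (hcard : ∀ A ∈ 𝒜, A.card = k)
    (hSidon : ∀ A ∈ 𝒜, ∀ B ∈ 𝒜, ∀ U ∈ 𝒜, ∀ V ∈ 𝒜,
      A + B = U + V → ({A, B} : Finset (Finset ℤ)) = {U, V}) :
    𝒜.card ≤ Nat.choose (N - 1) (k - 1) + N - k := by
  have hreps := card_filter_eq_classRep_le hsub hcard (by omega)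
  have hothers := card_filter_ne_classRep_le hSidon hsub hcard (by omega)
  rw [← card_filter_add_card_filter_not (fun A => A = classRep 𝒜 A)]
  have hsum := add_le_add hreps hothers
  omega
end

section
/- For N ≥ 3, the family 𝒜 = {{1, 1+i} : 1 ≤ i ≤ N-1} ∪ {{N-i, N} : 1 ≤ i ≤ N-2} of 2-element subsets of {1,…,N} is a Sidon system of cardinality 2N - 3. -/
set_option maxHeartbeats 1000000

open Finset Pointwise

lemma pair_add_pair (a b c d : ℤ) :
    ({a, b} : Finset ℤ) + {c, d} = {a + c, a + d, b + c, b + d} := by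
  ext x
  simp only [Finset.mem_add, Finset.mem_insert, Finset.mem_singleton]
  constructor
  · rintro ⟨y, (rfl | rfl), z, (rfl | rfl), rfl⟩ <;> tauto
  · rintro (rfl | rfl | rfl | rfl)
    exacts [⟨a, by tauto, c, by tauto, rfl⟩, ⟨a, by tauto, d, by tauto, rfl⟩,
      ⟨b, by tauto, c, by tauto, rfl⟩, ⟨b, by tauto, d, by tauto, rfl⟩]

lemma sidon_key (N a b c d p q r s : ℤ)
    (h1 : 1 ≤ a ∧ a < b ∧ b ≤ N ∧ (a = 1 ∨ b = N))
    (h2 : 1 ≤ c ∧ c < d ∧ d ≤ N ∧ (c = 1 ∨ d = N))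
    (h3 : 1 ≤ p ∧ p < q ∧ q ≤ N ∧ (p = 1 ∨ q = N))
    (h4 : 1 ≤ r ∧ r < s ∧ s ≤ N ∧ (r = 1 ∨ s = N))
    (hmem : ∀ x : ℤ, (x = a+c ∨ x = a+d ∨ x = b+c ∨ x = b+d) ↔
      (x = p+r ∨ x = p+s ∨ x = q+r ∨ x = q+s)) :
    (a = p ∧ b = q ∧ c = r ∧ d = s) ∨ (a = r ∧ b = s ∧ c = p ∧ d = q) := by
  obtain ⟨ha1, ha2, ha3, hA⟩ := h1
  obtain ⟨hb1, hb2, hb3, hB⟩ := h2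
  obtain ⟨hc1, hc2, hc3, hC⟩ := h3
  obtain ⟨hd1, hd2, hd3, hD⟩ := h4
  have t1 := (hmem (a+c)).mp (Or.inl rfl)
  have t2 := (hmem (p+r)).mpr (Or.inl rfl)
  have t3 := (hmem (b+d)).mp (Or.inr (Or.inr (Or.inr rfl)))
  have t4 := (hmem (q+s)).mpr (Or.inr (Or.inr (Or.inr rfl)))
  have m2 := (hmem (a+d)).mp (Or.inr (Or.inl rfl))
  have m3 := (hmem (b+c)).mp (Or.inr (Or.inr (Or.inl rfl)))
  have m6 := (hmem (p+s)).mpr (Or.inr (Or.inl rfl))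
  have m7 := (hmem (q+r)).mpr (Or.inr (Or.inr (Or.inl rfl)))
  clear hmem
  have hmin : a + c = p + r := by omega
  have hmax : b + d = q + s := by omega
  clear t1 t2 t3 t4
  rcases hA with hA | hA <;> rcases hB with hB | hB <;> rcases hC with hC | hC <;>
    rcases hD with hD | hD <;> omega

theorem sidon_system_k2_construction (N : ℕ) (hN : 3 ≤ N) :
    let 𝒜 : Finset (Finset ℤ) :=
      ((Finset.Icc (1 : ℤ) ((N : ℤ) - 1)).image fun i => ({1, 1 + i} : Finset ℤ)) ∪
      ((Finset.Icc (1 : ℤ) ((N : ℤ) - 2)).image fun i => ({(N : ℤ) - i, (N : ℤ)} : Finset ℤ))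
    (∀ A ∈ 𝒜, ∀ B ∈ 𝒜, ∀ U ∈ 𝒜, ∀ V ∈ 𝒜,
      A + B = U + V → ({A, B} : Finset (Finset ℤ)) = {U, V}) ∧
    𝒜.card = 2 * N - 3 := by
  intro 𝒜
  have hN' : (3 : ℤ) ≤ (N : ℤ) := by exact_mod_cast hN
  have hnorm : ∀ A ∈ 𝒜, ∃ a b : ℤ,
      (1 ≤ a ∧ a < b ∧ b ≤ (N : ℤ) ∧ (a = 1 ∨ b = (N : ℤ))) ∧ A = {a, b} := by
    intro A hA
    rcases Finset.mem_union.mp hA with h | h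
    · obtain ⟨i, hi, rfl⟩ := Finset.mem_image.mp h
      rw [Finset.mem_Icc] at hi
      exact ⟨1, 1 + i, ⟨le_refl 1, by omega, by omega, Or.inl rfl⟩, rfl⟩
    · obtain ⟨j, hj, rfl⟩ := Finset.mem_image.mp h
      rw [Finset.mem_Icc] at hj
      exact ⟨(N : ℤ) - j, (N : ℤ), ⟨by omega, by omega, le_refl _, Or.inr rfl⟩, rfl⟩
  constructor
  · intro A hA B hB U hU V hV hsum
    obtain ⟨a, b, hab, rfl⟩ := hnorm A hA
    obtain ⟨c, d, hcd, rfl⟩ := hnorm B hB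
    obtain ⟨p, q, hpq, rfl⟩ := hnorm U hU
    obtain ⟨r, s, hrs, rfl⟩ := hnorm V hV
    rw [pair_add_pair, pair_add_pair] at hsum
    have hmem : ∀ x : ℤ, (x = a+c ∨ x = a+d ∨ x = b+c ∨ x = b+d) ↔
        (x = p+r ∨ x = p+s ∨ x = q+r ∨ x = q+s) := by
      intro x
      have := Finset.ext_iff.mp hsum x
      simpa using this
    rcases sidon_key N a b c d p q r s hab hcd hpq hrs hmem with
      ⟨rfl, rfl, rfl, rfl⟩ | ⟨rfl, rfl, rfl, rfl⟩
    · rfl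
    · exact Finset.pair_comm _ _
  · have hinj1 : Set.InjOn (fun i : ℤ => ({1, 1 + i} : Finset ℤ))
        (Finset.Icc (1 : ℤ) ((N : ℤ) - 1)) := by
      intro i hi j hj hij
      rw [Finset.coe_Icc, Set.mem_Icc] at hi hj
      simp only at hij
      have h1 : (1 + i : ℤ) ∈ ({1, 1 + j} : Finset ℤ) := by
        rw [← hij]; simp
      simp only [Finset.mem_insert, Finset.mem_singleton] at h1
      omega
    have hinj2 : Set.InjOn (fun i : ℤ => ({(N : ℤ) - i, (N : ℤ)} : Finset ℤ))
        (Finset.Icc (1 : ℤ) ((N : ℤ) - 2)) := by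
      intro i hi j hj hij
      rw [Finset.coe_Icc, Set.mem_Icc] at hi hj
      simp only at hij
      have h1 : ((N : ℤ) - i) ∈ ({(N : ℤ) - j, (N : ℤ)} : Finset ℤ) := by
        rw [← hij]; simp
      simp only [Finset.mem_insert, Finset.mem_singleton] at h1
      omega
    have hdisj : Disjoint
        ((Finset.Icc (1 : ℤ) ((N : ℤ) - 1)).image fun i => ({1, 1 + i} : Finset ℤ))
        ((Finset.Icc (1 : ℤ) ((N : ℤ) - 2)).image fun i => ({(N : ℤ) - i, (N : ℤ)} : Finset ℤ)) := by
      rw [Finset.disjoint_left]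
      intro X h1 h2
      obtain ⟨i, hi, rfl⟩ := Finset.mem_image.mp h1
      obtain ⟨j, hj, hXeq⟩ := Finset.mem_image.mp h2
      rw [Finset.mem_Icc] at hi hj
      have hm : (N : ℤ) ∈ ({1, 1 + i} : Finset ℤ) := by
        rw [← hXeq]; simp
      have hm2 : (N : ℤ) - j ∈ ({1, 1 + i} : Finset ℤ) := by
        rw [← hXeq]; simp
      simp only [Finset.mem_insert, Finset.mem_singleton] at hm hm2
      omega
    simp only [𝒜]
    rw [Finset.card_union_of_disjoint hdisj, Finset.card_image_of_injOn hinj1,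
      Finset.card_image_of_injOn hinj2, Int.card_Icc, Int.card_Icc]
    omega
end

section
/- Let A = {0, a₁, a₂} and B = {0, b₁, b₂} with 0 < a₁ < a₂, 0 < b₁ < b₂, and a₁ ≤ b₁. If the sumset A + B has exactly 9 elements (all nine pairwise sums are distinct), then A + B uniquely determines the pair {A, B}: if U = {0, u₁, u₂}, V = {0, v₁, v₂} with 0 < u₁ < u₂, 0 < v₁ < v₂, u₁ ≤ v₁, |U + V| = 9, and U + V = A + B, then {U, V} = {A, B}. -/
/-!
In `A + B` the least positive element is `a₁`, the largest is `a₂ + b₂`, and when the nine sums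
are distinct their total is `3 (a₁ + a₂ + b₁ + b₂)`. Hence `U + V = A + B` forces `u₁ = a₁`,
`u₂ + v₂ = a₂ + b₂` and then `v₁ = b₁`. What is left is a short case analysis: `u₂` must be one of
the four sums `a₂, a₂ + b₁, b₂, a₁ + b₂` not yet accounted for, and only `u₂ = a₂` survives the
distinctness of the sums.
-/

open Finset Pointwise

section AddCommMonoid

variable {α : Type*} [DecidableEq α] [AddCommMonoid α] (a₁ a₂ b₁ b₂ : α)

theorem triple_add_triple_eq_toFinset :
    ({0, a₁, a₂} : Finset α) + {0, b₁, b₂} =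
      [0, a₁, a₂, b₁, a₁ + b₁, a₂ + b₁, b₂, a₁ + b₂, a₂ + b₂].toFinset := by
  ext x
  simp only [mem_add, mem_insert, mem_singleton, List.mem_toFinset, List.mem_cons,
    List.not_mem_nil, or_false]
  constructor
  · rintro ⟨a, ha, b, hb, rfl⟩
    rcases ha with rfl | rfl | rfl <;> rcases hb with rfl | rfl | rfl <;> simp
  · rintro (rfl | rfl | rfl | rfl | rfl | rfl | rfl | rfl | rfl) <;> simp

theorem mem_triple_add_triple {x : α} :
    x ∈ ({0, a₁, a₂} : Finset α) + {0, b₁, b₂} ↔ x = 0 ∨ x = a₁ ∨ x = a₂ ∨ x = b₁ ∨ x = a₁ + b₁ ∨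
      x = a₂ + b₁ ∨ x = b₂ ∨ x = a₁ + b₂ ∨ x = a₂ + b₂ := by
  simp [triple_add_triple_eq_toFinset]

theorem nodup_of_card_triple_add_triple_eq_nine
    (h : #(({0, a₁, a₂} : Finset α) + {0, b₁, b₂}) = 9) :
    [0, a₁, a₂, b₁, a₁ + b₁, a₂ + b₁, b₂, a₁ + b₂, a₂ + b₂].Nodup :=
  Multiset.coe_nodup.mp <| Multiset.toFinset_card_eq_card_iff_nodup.mp <| by
    rwa [triple_add_triple_eq_toFinset] at h

theorem sum_triple_add_triple_of_card_eq_nine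
    (h : #(({0, a₁, a₂} : Finset α) + {0, b₁, b₂}) = 9) :
    ∑ x ∈ ({0, a₁, a₂} : Finset α) + {0, b₁, b₂}, x = 3 • (a₁ + a₂ + b₁ + b₂) := by
  rw [triple_add_triple_eq_toFinset,
    List.sum_toFinset _ (nodup_of_card_triple_add_triple_eq_nine a₁ a₂ b₁ b₂ h)]
  simp only [List.map_id', List.sum_cons, List.sum_nil]
  abel

end AddCommMonoid

section Int

variable {a₁ a₂ b₁ b₂ x : ℤ}

theorem le_of_mem_triple_add_triple (ha : 0 ≤ a₁) (ha' : a₁ ≤ a₂) (hab : a₁ ≤ b₁)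
    (hb' : b₁ ≤ b₂) (hx : x ∈ ({0, a₁, a₂} : Finset ℤ) + {0, b₁, b₂}) (hx0 : x ≠ 0) : a₁ ≤ x := by
  rw [mem_triple_add_triple] at hx
  omega

theorem le_add_of_mem_triple_add_triple (ha : 0 ≤ a₁) (ha' : a₁ ≤ a₂) (hb : 0 ≤ b₁)
    (hb' : b₁ ≤ b₂) (hx : x ∈ ({0, a₁, a₂} : Finset ℤ) + {0, b₁, b₂}) : x ≤ a₂ + b₂ := by
  rw [mem_triple_add_triple] at hx
  omega

theorem eq_of_triple_add_triple_eq {u₂ v₂ : ℤ} (ha : 0 < a₁) (hab : a₁ ≤ b₁) (hu' : a₁ < u₂)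
    (hv' : b₁ < v₂) (hA9 : #(({0, a₁, a₂} : Finset ℤ) + {0, b₁, b₂}) = 9)
    (hU9 : #(({0, a₁, u₂} : Finset ℤ) + {0, b₁, v₂}) = 9)
    (heq : ({0, a₁, u₂} : Finset ℤ) + {0, b₁, v₂} = ({0, a₁, a₂} : Finset ℤ) + {0, b₁, b₂})
    (hmax : u₂ + v₂ = a₂ + b₂) :
    u₂ = a₂ ∧ v₂ = b₂ := by
  have hA := nodup_of_card_triple_add_triple_eq_nine a₁ a₂ b₁ b₂ hA9
  have hU := nodup_of_card_triple_add_triple_eq_nine a₁ u₂ b₁ v₂ hU9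
  simp only [List.nodup_cons, List.mem_cons, List.not_mem_nil, not_or, or_false] at hA hU
  have hmem (x : ℤ) := (mem_triple_add_triple a₁ u₂ b₁ v₂).symm.trans <|
    heq ▸ mem_triple_add_triple (x := x) a₁ a₂ b₁ b₂
  have hu₂ : u₂ = a₂ ∨ u₂ = a₂ + b₁ ∨ u₂ = b₂ ∨ u₂ = a₁ + b₂ := by
    have := (hmem u₂).mp (by simp)
    omega
  have hv₂ : v₂ = a₂ ∨ v₂ = a₂ + b₁ ∨ v₂ = b₂ ∨ v₂ = a₁ + b₂ := by
    have := (hmem v₂).mp (by simp)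
    omega
  have hab₂ := (hmem (a₂ + b₁)).mpr (by simp)
  rcases hu₂ with h | h | h | h <;> rcases hv₂ with h' | h' | h' | h' <;> omega

end Int

theorem sumset_nine_determines (a₁ a₂ b₁ b₂ u₁ u₂ v₁ v₂ : ℤ)
    (ha : 0 < a₁) (ha' : a₁ < a₂) (hb : 0 < b₁) (hb' : b₁ < b₂) (hab : a₁ ≤ b₁)
    (hu : 0 < u₁) (hu' : u₁ < u₂) (hv : 0 < v₁) (hv' : v₁ < v₂) (huv : u₁ ≤ v₁)
    (hA9 : ((({0, a₁, a₂} : Finset ℤ) + ({0, b₁, b₂} : Finset ℤ)).card = 9))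
    (hU9 : ((({0, u₁, u₂} : Finset ℤ) + ({0, v₁, v₂} : Finset ℤ)).card = 9))
    (heq : ({0, u₁, u₂} : Finset ℤ) + ({0, v₁, v₂} : Finset ℤ) =
           ({0, a₁, a₂} : Finset ℤ) + ({0, b₁, b₂} : Finset ℤ)) :
    ({({0, u₁, u₂} : Finset ℤ), ({0, v₁, v₂} : Finset ℤ)} : Finset (Finset ℤ)) =
    {({0, a₁, a₂} : Finset ℤ), ({0, b₁, b₂} : Finset ℤ)} := by
  have hmemA (x : ℤ) (hx : x ∈ ({0, u₁, u₂} : Finset ℤ) + {0, v₁, v₂}) := heq ▸ hx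
  have hmemU (x : ℤ) (hx : x ∈ ({0, a₁, a₂} : Finset ℤ) + {0, b₁, b₂}) := heq.symm ▸ hx
  obtain rfl : a₁ = u₁ := le_antisymm
    (le_of_mem_triple_add_triple ha.le ha'.le hab hb'.le
      (hmemA u₁ (by simp [mem_triple_add_triple])) hu.ne')
    (le_of_mem_triple_add_triple hu.le hu'.le huv hv'.le
      (hmemU a₁ (by simp [mem_triple_add_triple])) ha.ne')
  have hmax : u₂ + v₂ = a₂ + b₂ := le_antisymm
    (le_add_of_mem_triple_add_triple ha.le ha'.le hb.le hb'.le
      (hmemA _ (by simp [mem_triple_add_triple])))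
    (le_add_of_mem_triple_add_triple hu.le hu'.le hv.le hv'.le
      (hmemU _ (by simp [mem_triple_add_triple])))
  have hsum := sum_triple_add_triple_of_card_eq_nine a₁ a₂ b₁ b₂ hA9
  rw [← heq, sum_triple_add_triple_of_card_eq_nine a₁ u₂ v₁ v₂ hU9,
    smul_right_inj three_ne_zero] at hsum
  obtain rfl : b₁ = v₁ := by omega
  obtain ⟨rfl, rfl⟩ := eq_of_triple_add_triple_eq ha hab hu' hv' hA9 hU9 heq hmax
  rfl
end

section
/- Let A = {a₀ = 0 < a₁ < … < a_{k-1}} be a Sidon set of integers (all pairwise sums aᵢ + aⱼ with i ≤ j are distinct). Let I₀ = {0} and for 1 ≤ i ≤ k-1 let Iᵢ be a set of integers contained in the half-open interval [c·aᵢ, c·(aᵢ + 1/2)) for some real c > 0. Then for all i ≤ j and i' ≤ j' in {0,…,k-1}, (Iᵢ + Iⱼ) ∩ (I_{i'} + I_{j'}) = ∅ unless {i,j} = {i',j'}. -/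
open Finset Pointwise

theorem sidon_intervals_disjoint (k : ℕ) (a : ℕ → ℤ) (c : ℝ) (hc : 0 < c)
    (ha0 : a 0 = 0)
    (hmono : ∀ i j : ℕ, i < j → j < k → a i < a j)
    (hSidon : ∀ i j i' j' : ℕ, i < k → j < k → i' < k → j' < k →
      a i + a j = a i' + a j' → ({i, j} : Finset ℕ) = {i', j'})
    (I : ℕ → Finset ℤ) (hI0 : I 0 = {0})
    (hI : ∀ i : ℕ, 1 ≤ i → i < k → ∀ x ∈ I i,
      c * (a i : ℝ) ≤ (x : ℝ) ∧ (x : ℝ) < c * ((a i : ℝ) + 1 / 2)) :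
    ∀ i j i' j' : ℕ, i ≤ j → j < k → i' ≤ j' → j' < k →
      ¬ (i = i' ∧ j = j') → Disjoint (I i + I j) (I i' + I j') := by
  intro i j i' j' hij hjk hij' hj'k hne
  have hb : ∀ m : ℕ, m < k → ∀ x ∈ I m,
      c * (a m : ℝ) ≤ (x : ℝ) ∧ (x : ℝ) < c * ((a m : ℝ) + 1 / 2) := by
    intro m hm x hx
    rcases Nat.eq_zero_or_pos m with h0 | h1
    · subst h0
      rw [hI0, Finset.mem_singleton] at hx
      subst hx
      rw [ha0]
      norm_num
      positivity
    · exact hI m h1 hm x hx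
  rw [Finset.disjoint_left]
  intro z hz hz'
  rw [Finset.mem_add] at hz hz'
  obtain ⟨x, hx, y, hy, rfl⟩ := hz
  obtain ⟨x', hx', y', hy', hxy⟩ := hz'
  have hik : i < k := lt_of_le_of_lt hij hjk
  have hik' : i' < k := lt_of_le_of_lt hij' hj'k
  obtain ⟨hx1, hx2⟩ := hb i hik x hx
  obtain ⟨hy1, hy2⟩ := hb j hjk y hy
  obtain ⟨hx1', hx2'⟩ := hb i' hik' x' hx'
  obtain ⟨hy1', hy2'⟩ := hb j' hj'k y' hy'
  have heq : ((x' : ℝ) + y') = (x : ℝ) + y := by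
    exact_mod_cast congrArg (fun t : ℤ => (t : ℝ)) hxy
  have hsum : a i + a j = a i' + a j' := by
    have h1 : ((a i + a j : ℤ) : ℝ) < ((a i' + a j' : ℤ) : ℝ) + 1 := by
      have h : c * ((a i : ℝ) + a j) < c * ((a i' : ℝ) + a j' + 1) := by nlinarith
      have := (mul_lt_mul_iff_right₀ hc).mp h
      push_cast
      linarith
    have h2 : ((a i' + a j' : ℤ) : ℝ) < ((a i + a j : ℤ) : ℝ) + 1 := by
      have h : c * ((a i' : ℝ) + a j') < c * ((a i : ℝ) + a j + 1) := by nlinarith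
      have := (mul_lt_mul_iff_right₀ hc).mp h
      push_cast
      linarith
    have h1' : a i + a j < a i' + a j' + 1 := by exact_mod_cast (by push_cast at h1 ⊢; linarith : ((a i + a j : ℤ) : ℝ) < ((a i' + a j' + 1 : ℤ) : ℝ))
    have h2' : a i' + a j' < a i + a j + 1 := by exact_mod_cast (by push_cast at h2 ⊢; linarith : ((a i' + a j' : ℤ) : ℝ) < ((a i + a j + 1 : ℤ) : ℝ))
    omega
  have hset := hSidon i j i' j' hik hjk hik' hj'k hsum
  have m1 : i ∈ ({i', j'} : Finset ℕ) := hset ▸ Finset.mem_insert_self i {j}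
  have m2 : j ∈ ({i', j'} : Finset ℕ) := hset ▸ Finset.mem_insert_of_mem (Finset.mem_singleton_self j)
  have m3 : i' ∈ ({i, j} : Finset ℕ) := hset.symm ▸ Finset.mem_insert_self i' {j'}
  have m4 : j' ∈ ({i, j} : Finset ℕ) := hset.symm ▸ Finset.mem_insert_of_mem (Finset.mem_singleton_self j')
  simp only [Finset.mem_insert, Finset.mem_singleton] at m1 m2 m3 m4
  omega
end

section
/- Fix k ≥ 3 and a Sidon set 0 = a₀ < a₁ < … < a_{k-1} ≤ 2k². For N ≥ 2(2k²+1), define intervals Iᵢ = (N/(a_{k-1}+1))·[aᵢ, aᵢ + 1/2) ∩ ℕ for 1 ≤ i ≤ k-1 and I₀ = {0}. Then the family ℬ = {{b₀, …, b_{k-1}} : bᵢ ∈ Iᵢ} is a Sidon system: if U, V, U*, V* ∈ ℬ with U + V = U* + V*, then {U, V} = {U*, V*}. -/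
/-!
With `c = N / (a (k-1) + 1)`, every element of `I i` lies in `[c aᵢ, c aᵢ + c/2)`, so for
`x ∈ I i`, `y ∈ I j` the floor of `(x + y) / c` is `aᵢ + aⱼ`, and the Sidon property recovers
`{i, j}` from `x + y`. Hence each element `uᵢ + vⱼ` of `U + V = U* + V*` equals `u*ᵢ + v*ⱼ` or
`u*ⱼ + v*ᵢ`. Pairing with the coordinate `0`, where all four sets contain only `0`, gives
`{uᵢ, vᵢ} = {u*ᵢ, v*ᵢ}` coordinatewise; and a coordinate where the pair is swapped together
with one where it is not (and `uⱼ ≠ vⱼ`) would make `uᵢ + vⱼ` violate the previous dichotomy.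
-/

open Finset Pointwise

theorem Finset.pair_eq_pair_iff {α : Type*} [DecidableEq α] {x y z w : α} :
    ({x, y} : Finset α) = {z, w} ↔ x = z ∧ y = w ∨ x = w ∧ y = z := by
  rw [← coe_inj, coe_pair, coe_pair, Set.pair_eq_pair_iff]

theorem Int.floor_div_eq_of_mem_Ico {K : Type*} [Field K] [LinearOrder K] [IsStrictOrderedRing K]
    [FloorRing K] {c x : K} {m : ℤ} (hc : 0 < c) (hx : x ∈ Set.Ico (c * m) (c * (m + 1))) :
    ⌊x / c⌋ = m := by
  rw [Int.floor_eq_iff, le_div_iff₀ hc, div_lt_iff₀ hc, mul_comm, mul_comm (_ + 1)]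
  exact hx

section CrossSums

variable {ι G : Type*} {s : Finset ι} {b d b' d' : ι → G}

theorem eq_or_swap_of_cross_sums [AddCommMonoid G] {i₀ : ι} (hi₀ : i₀ ∈ s)
    (hzero : b i₀ = 0 ∧ d i₀ = 0 ∧ b' i₀ = 0 ∧ d' i₀ = 0)
    (h : ∀ i ∈ s, ∀ j ∈ s, b i + d j = b' i + d' j ∨ b i + d j = b' j + d' i)
    (h' : ∀ i ∈ s, ∀ j ∈ s, b' i + d' j = b i + d j ∨ b' i + d' j = b j + d i) {i : ι}
    (hi : i ∈ s) : b' i = b i ∧ d' i = d i ∨ b' i = d i ∧ d' i = b i := by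
  obtain ⟨hb₀, hd₀, hb'₀, hd'₀⟩ := hzero
  have h₁ := h i hi i₀ hi₀
  have h₂ := h i₀ hi₀ i hi
  have h₃ := h' i hi i₀ hi₀
  have h₄ := h' i₀ hi₀ i hi
  simp only [hb₀, hd₀, hb'₀, hd'₀, add_zero, zero_add] at h₁ h₂ h₃ h₄
  grind

theorem eqOn_or_swap_of_cross_sums [AddCancelCommMonoid G]
    (h : ∀ i ∈ s, ∀ j ∈ s, b i + d j = b' i + d' j ∨ b i + d j = b' j + d' i)
    (hcoord : ∀ i ∈ s, b' i = b i ∧ d' i = d i ∨ b' i = d i ∧ d' i = b i) :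
    Set.EqOn b' b s ∧ Set.EqOn d' d s ∨ Set.EqOn b' d s ∧ Set.EqOn d' b s := by
  by_cases hsame : Set.EqOn b' b s
  · refine .inl ⟨hsame, fun i hi => ?_⟩
    rcases hcoord i hi with ⟨-, hd⟩ | ⟨hb', hd'⟩
    · exact hd
    · rw [hd', ← hsame hi, hb']
  obtain ⟨i₀, hi₀, hne⟩ : ∃ i ∈ s, b' i ≠ b i := by
    simpa [Set.EqOn] using hsame
  obtain ⟨hb'₀, hd'₀⟩ : b' i₀ = d i₀ ∧ d' i₀ = b i₀ := (hcoord i₀ hi₀).resolve_left (hne ·.1)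
  suffices hswap : ∀ j ∈ s, b' j = d j ∧ d' j = b j from
    .inr ⟨fun j hj => (hswap j hj).1, fun j hj => (hswap j hj).2⟩
  intro j hj
  refine (hcoord j hj).elim (fun ⟨hb', hd'⟩ => ?_) id
  -- Both representations of `b i₀ + d j` allowed by `h` force `b = d` at `i₀` or at `j`.
  suffices hbd : b j = d j from ⟨hb'.trans hbd, hd'.trans hbd.symm⟩
  rcases h i₀ hi₀ j hj with e | e
  · rw [hb'₀, hd', add_left_inj] at e
    exact absurd (hb'₀.trans e.symm) hne
  · rw [hb', hd'₀, add_comm, add_left_inj] at e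
    exact e.symm

end CrossSums

variable {ι : Type*} [DecidableEq ι]

/-- For singletons `I i = {a i}` this says that `a` is a Sidon family. -/
def SumDeterminesPair {G : Type*} [Add G] (s : Finset ι) (I : ι → Finset G) :
    Prop :=
  ∀ i ∈ s, ∀ j ∈ s, ∀ i' ∈ s, ∀ j' ∈ s, ∀ x ∈ I i, ∀ y ∈ I j, ∀ x' ∈ I i', ∀ y' ∈ I j',
    x + y = x' + y' → ({i, j} : Finset ι) = {i', j'}

theorem sumDeterminesPair_of_mem_Ico {K : Type*} [Field K] [LinearOrder K]
    [IsStrictOrderedRing K] [FloorRing K] {s : Finset ι} {a : ι → ℤ} {I : ι → Finset ℤ} {c : K}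
    (hc : 0 < c)
    (ha : ∀ i ∈ s, ∀ j ∈ s, ∀ i' ∈ s, ∀ j' ∈ s,
      a i + a j = a i' + a j' → ({i, j} : Finset ι) = {i', j'})
    (hI : ∀ i ∈ s, ∀ x ∈ I i, (x : K) ∈ Set.Ico (c * a i) (c * a i + c / 2)) :
    SumDeterminesPair s I := by
  have floor_sum : ∀ i ∈ s, ∀ j ∈ s, ∀ x ∈ I i, ∀ y ∈ I j, ⌊((x + y : ℤ) : K) / c⌋ = a i + a j := by
    intro i hi j hj x hx y hy
    obtain ⟨hx₁, hx₂⟩ := hI i hi x hx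
    obtain ⟨hy₁, hy₂⟩ := hI j hj y hy
    refine Int.floor_div_eq_of_mem_Ico hc ⟨?_, ?_⟩ <;> push_cast <;> linarith
  intro i hi j hj i' hi' j' hj' x hx y hy x' hx' y' hy' hxy
  refine ha i hi j hj i' hi' j' hj' ?_
  rw [← floor_sum i hi j hj x hx y hy, ← floor_sum i' hi' j' hj' x' hx' y' hy', hxy]

theorem add_eq_or_add_eq_of_image_add_image_eq {G : Type*} [AddCommMonoid G] [DecidableEq G]
    {s : Finset ι} {I : ι → Finset G} {b d b' d' : ι → G} (hI : SumDeterminesPair s I)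
    (hb : ∀ i ∈ s, b i ∈ I i) (hd : ∀ i ∈ s, d i ∈ I i)
    (hb' : ∀ i ∈ s, b' i ∈ I i) (hd' : ∀ i ∈ s, d' i ∈ I i)
    (heq : s.image b + s.image d = s.image b' + s.image d') {i j : ι} (hi : i ∈ s) (hj : j ∈ s) :
    b i + d j = b' i + d' j ∨ b i + d j = b' j + d' i := by
  have hmem : b i + d j ∈ s.image b' + s.image d' :=
    heq ▸ add_mem_add (mem_image_of_mem b hi) (mem_image_of_mem d hj)
  obtain ⟨_, hx, _, hy, hpq⟩ := mem_add.1 hmem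
  obtain ⟨p, hp, rfl⟩ := mem_image.1 hx
  obtain ⟨q, hq, rfl⟩ := mem_image.1 hy
  have hpair := hI i hi j hj p hp q hq _ (hb i hi) _ (hd j hj) _ (hb' p hp) _ (hd' q hq) hpq.symm
  rcases Finset.pair_eq_pair_iff.1 hpair with ⟨rfl, rfl⟩ | ⟨rfl, rfl⟩
  · exact .inl hpq.symm
  · exact .inr hpq.symm

theorem pair_image_eq_of_image_add_image_eq {G : Type*} [AddCancelCommMonoid G] [DecidableEq G]
    {s : Finset ι} {I : ι → Finset G} {i₀ : ι} {b d b' d' : ι → G}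
    (hI : SumDeterminesPair s I) (hi₀ : i₀ ∈ s) (hI₀ : I i₀ = {0})
    (hb : ∀ i ∈ s, b i ∈ I i) (hd : ∀ i ∈ s, d i ∈ I i)
    (hb' : ∀ i ∈ s, b' i ∈ I i) (hd' : ∀ i ∈ s, d' i ∈ I i)
    (heq : s.image b + s.image d = s.image b' + s.image d') :
    ({s.image b, s.image d} : Finset (Finset G)) = {s.image b', s.image d'} := by
  have hzero : ∀ f : ι → G, (∀ i ∈ s, f i ∈ I i) → f i₀ = 0 := fun f hf =>
    mem_singleton.1 (hI₀ ▸ hf i₀ hi₀)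
  have hcross := fun i (hi : i ∈ s) j (hj : j ∈ s) =>
    add_eq_or_add_eq_of_image_add_image_eq hI hb hd hb' hd' heq hi hj
  have hcross' := fun i (hi : i ∈ s) j (hj : j ∈ s) =>
    add_eq_or_add_eq_of_image_add_image_eq hI hb' hd' hb hd heq.symm hi hj
  have hcoord := fun i (hi : i ∈ s) => eq_or_swap_of_cross_sums hi₀
    ⟨hzero b hb, hzero d hd, hzero b' hb', hzero d' hd'⟩ hcross hcross' hi
  rcases eqOn_or_swap_of_cross_sums hcross hcoord with ⟨hbb, hdd⟩ | ⟨hbd, hdb⟩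
  · rw [image_congr hbb, image_congr hdd]
  · rw [image_congr hbd, image_congr hdb, pair_comm]

theorem interval_construction_is_sidon_system_general (k N : ℕ) (hk : 3 ≤ k)
    (a : ℕ → ℤ) (ha0 : a 0 = 0)
    (hmono : ∀ i j : ℕ, i < j → j < k → a i < a j)
    (hSidon : ∀ i j i' j' : ℕ, i < k → j < k → i' < k → j' < k →
      a i + a j = a i' + a j' → ({i, j} : Finset ℕ) = {i', j'})
    (hN : 2 * (2 * k ^ 2 + 1) ≤ N)
    (I : ℕ → Finset ℤ) (hI0 : I 0 = {0})
    (hIdef : ∀ i : ℕ, 1 ≤ i → i < k →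
      I i = (Finset.Icc (0 : ℤ) (N : ℤ)).filter (fun n : ℤ =>
        ((N : ℚ) / ((a (k - 1) : ℚ) + 1)) * (a i : ℚ) ≤ (n : ℚ) ∧
        (n : ℚ) < ((N : ℚ) / ((a (k - 1) : ℚ) + 1)) * ((a i : ℚ) + 1 / 2)))
    (U V U' V' : Finset ℤ)
    (hU : ∃ b : ℕ → ℤ, (∀ i < k, b i ∈ I i) ∧ U = (Finset.range k).image b)
    (hV : ∃ b : ℕ → ℤ, (∀ i < k, b i ∈ I i) ∧ V = (Finset.range k).image b)
    (hU' : ∃ b : ℕ → ℤ, (∀ i < k, b i ∈ I i) ∧ U' = (Finset.range k).image b)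
    (hV' : ∃ b : ℕ → ℤ, (∀ i < k, b i ∈ I i) ∧ V' = (Finset.range k).image b)
    (heq : U + V = U' + V') :
    ({U, V} : Finset (Finset ℤ)) = {U', V'} := by
  obtain ⟨b, hb, rfl⟩ := hU
  obtain ⟨d, hd, rfl⟩ := hV
  obtain ⟨b', hb', rfl⟩ := hU'
  obtain ⟨d', hd', rfl⟩ := hV'
  set c : ℚ := (N : ℚ) / ((a (k - 1) : ℚ) + 1)
  have hc : 0 < c := by
    have hmax : (0 : ℚ) < a (k - 1) := by
      exact_mod_cast ha0 ▸ hmono 0 (k - 1) (by omega) (by omega)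
    have hN₀ : (0 : ℚ) < N := by
      exact_mod_cast (by positivity : 0 < 2 * (2 * k ^ 2 + 1)).trans_le hN
    positivity
  have hIco : ∀ i ∈ range k, ∀ x ∈ I i, (x : ℚ) ∈ Set.Ico (c * a i) (c * a i + c / 2) := by
    intro i hi x hx
    rcases Nat.eq_zero_or_pos i with rfl | hi₁
    · rw [hI0, mem_singleton] at hx
      simp [hx, ha0, hc]
    · rw [hIdef i hi₁ (mem_range.1 hi), mem_filter] at hx
      exact ⟨hx.2.1, by linarith [hx.2.2]⟩
  have hsep : SumDeterminesPair (range k) I := sumDeterminesPair_of_mem_Ico hc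
    (fun i hi j hj i' hi' j' hj' =>
      hSidon i j i' j' (mem_range.1 hi) (mem_range.1 hj) (mem_range.1 hi') (mem_range.1 hj'))
    hIco
  exact pair_image_eq_of_image_add_image_eq hsep (mem_range.2 (by omega)) hI0
    (fun i hi => hb i (mem_range.1 hi)) (fun i hi => hd i (mem_range.1 hi))
    (fun i hi => hb' i (mem_range.1 hi)) (fun i hi => hd' i (mem_range.1 hi)) heq

theorem interval_construction_is_sidon_system (k N : ℕ) (hk : 3 ≤ k)
    (a : ℕ → ℤ) (ha0 : a 0 = 0)
    (hmono : ∀ i j : ℕ, i < j → j < k → a i < a j)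
    (hbound : a (k - 1) ≤ 2 * (k : ℤ) ^ 2)
    (hSidon : ∀ i j i' j' : ℕ, i < k → j < k → i' < k → j' < k →
      a i + a j = a i' + a j' → ({i, j} : Finset ℕ) = {i', j'})
    (hN : 2 * (2 * k ^ 2 + 1) ≤ N)
    (I : ℕ → Finset ℤ) (hI0 : I 0 = {0})
    (hIdef : ∀ i : ℕ, 1 ≤ i → i < k →
      I i = (Finset.Icc (0 : ℤ) (N : ℤ)).filter (fun n : ℤ =>
        ((N : ℚ) / ((a (k - 1) : ℚ) + 1)) * (a i : ℚ) ≤ (n : ℚ) ∧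
        (n : ℚ) < ((N : ℚ) / ((a (k - 1) : ℚ) + 1)) * ((a i : ℚ) + 1 / 2)))
    (U V U' V' : Finset ℤ)
    (hU : ∃ b : ℕ → ℤ, (∀ i < k, b i ∈ I i) ∧ U = (Finset.range k).image b)
    (hV : ∃ b : ℕ → ℤ, (∀ i < k, b i ∈ I i) ∧ V = (Finset.range k).image b)
    (hU' : ∃ b : ℕ → ℤ, (∀ i < k, b i ∈ I i) ∧ U' = (Finset.range k).image b)
    (hV' : ∃ b : ℕ → ℤ, (∀ i < k, b i ∈ I i) ∧ V' = (Finset.range k).image b)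
    (heq : U + V = U' + V') :
    ({U, V} : Finset (Finset ℤ)) = {U', V'} :=
  interval_construction_is_sidon_system_general k N hk a ha0 hmono hSidon hN I hI0 hIdef U V U' V'
    hU hV hU' hV' heq
end

section
/- For every k ≥ 2 there is a constant C_k such that the number of quadruples (A, B, C, D) of pairwise distinct k-element subsets of {1,…,N} with A + B = C + D is at most C_k · N^{2k+1}. -/
open Finset Pointwise

private lemma min'_eq_of_eq {S T : Finset ℤ} (h : S = T) (hS : S.Nonempty) (hT : T.Nonempty) :
    S.min' hS = T.min' hT := by subst h; rfl

private lemma min'_sumset (C D : Finset ℤ) (hC : C.Nonempty) (hD : D.Nonempty) :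
    (C + D).min' (hC.add hD) = C.min' hC + D.min' hD := by
  apply le_antisymm
  · exact min'_le _ _ (add_mem_add (min'_mem _ hC) (min'_mem _ hD))
  · apply le_min'
    intro y hy
    rw [Finset.mem_add] at hy
    obtain ⟨c, hc, d, hd, rfl⟩ := hy
    exact add_le_add (min'_le _ _ hc) (min'_le _ _ hd)

theorem count_C4_upper (k : ℕ) (hk : 2 ≤ k) :
    ∃ C : ℝ, 0 < C ∧ ∀ N : ℕ,
      ((((((Finset.Icc (1 : ℤ) N).powersetCard k) ×ˢ ((Finset.Icc (1 : ℤ) N).powersetCard k)) ×ˢ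
          (((Finset.Icc (1 : ℤ) N).powersetCard k) ×ˢ ((Finset.Icc (1 : ℤ) N).powersetCard k))).filter
          (fun q => q.1.1 ≠ q.1.2 ∧ q.1.1 ≠ q.2.1 ∧ q.1.1 ≠ q.2.2 ∧
                    q.1.2 ≠ q.2.1 ∧ q.1.2 ≠ q.2.2 ∧ q.2.1 ≠ q.2.2 ∧
                    q.1.1 + q.1.2 = q.2.1 + q.2.2)).card : ℝ) ≤ C * (N : ℝ) ^ (2 * k + 1) := by
  have hk0 : 0 < k := by omega
  set K : ℕ := (k * k).choose k with hKdef
  have hKpos : 0 < K := Nat.choose_pos (Nat.le_mul_of_pos_left k hk0)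
  refine ⟨(K * K : ℕ), by positivity, fun N => ?_⟩
  set P : Finset (Finset ℤ) := (Finset.Icc (1 : ℤ) N).powersetCard k with hP
  have hPne : ∀ A ∈ P, A.Nonempty := by
    intro A hA
    rw [hP, Finset.mem_powersetCard] at hA
    exact Finset.card_pos.mp (by omega)
  have hPcard : ∀ A ∈ P, A.card = k := by
    intro A hA
    rw [hP, Finset.mem_powersetCard] at hA
    exact hA.2
  have key : (((P ×ˢ P) ×ˢ (P ×ˢ P)).filter
          (fun q => q.1.1 ≠ q.1.2 ∧ q.1.1 ≠ q.2.1 ∧ q.1.1 ≠ q.2.2 ∧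
                    q.1.2 ≠ q.2.1 ∧ q.1.2 ≠ q.2.2 ∧ q.2.1 ≠ q.2.2 ∧
                    q.1.1 + q.1.2 = q.2.1 + q.2.2)).card ≤ (K * K) * (N ^ (2 * k + 1)) := by
    set s := ((P ×ˢ P) ×ˢ (P ×ˢ P)).filter
          (fun q => q.1.1 ≠ q.1.2 ∧ q.1.1 ≠ q.2.1 ∧ q.1.1 ≠ q.2.2 ∧
                    q.1.2 ≠ q.2.1 ∧ q.1.2 ≠ q.2.2 ∧ q.2.1 ≠ q.2.2 ∧
                    q.1.1 + q.1.2 = q.2.1 + q.2.2) with hs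
    set t : Finset ((Finset ℤ × Finset ℤ) × WithTop ℤ) :=
      (P ×ˢ P) ×ˢ ((Finset.Icc (1 : ℤ) N).image (WithTop.some : ℤ → WithTop ℤ)) with ht
    have maps : ∀ q ∈ s, ((q.1.1, q.1.2), q.2.1.min) ∈ t := by
      intro q hq
      rw [hs, Finset.mem_filter] at hq
      obtain ⟨hmem, _⟩ := hq
      simp only [Finset.mem_product] at hmem
      obtain ⟨⟨hA, hB⟩, hC, hD⟩ := hmem
      have hCne : q.2.1.Nonempty := hPne _ hC
      rw [ht, Finset.mem_product, Finset.mem_product]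
      refine ⟨⟨hA, hB⟩, ?_⟩
      rw [Finset.mem_image]
      refine ⟨q.2.1.min' hCne, ?_, Finset.coe_min' hCne⟩
      rw [hP, Finset.mem_powersetCard] at hC
      exact hC.1 (Finset.min'_mem _ hCne)
    have fiber : ∀ b ∈ t, (s.filter (fun q => ((q.1.1, q.1.2), q.2.1.min) = b)).card ≤ K * K := by
      rintro ⟨⟨A, B⟩, mo⟩ hb
      rw [ht, Finset.mem_product, Finset.mem_product] at hb
      obtain ⟨⟨hA, hB⟩, hmo⟩ := hb
      simp only at hA hB hmo
      rw [Finset.mem_image] at hmo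
      obtain ⟨m, hmIcc, rfl⟩ := hmo
      have hSne : (A + B).Nonempty := (hPne _ hA).add (hPne _ hB)
      have hScard : (A + B).card ≤ k * k := by
        calc (A + B).card ≤ A.card * B.card := Finset.card_add_le
        _ = k * k := by rw [hPcard _ hA, hPcard _ hB]
      set s₁ : ℤ := (A + B).min' hSne with hs₁
      set T₁ : Finset ℤ := (A + B).image (fun x => x - (s₁ - m)) with hT₁
      set T₂ : Finset ℤ := (A + B).image (fun x => x - m) with hT₂
      apply le_trans (Finset.card_le_card_of_injOn (fun q => (q.2.1, q.2.2)) ?_ ?_)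
      · calc ((T₁.powersetCard k) ×ˢ (T₂.powersetCard k)).card
            = (T₁.card.choose k) * (T₂.card.choose k) := by
              rw [Finset.card_product, Finset.card_powersetCard, Finset.card_powersetCard]
        _ ≤ K * K := by
            have h1 : T₁.card ≤ k * k := le_trans Finset.card_image_le hScard
            have h2 : T₂.card ≤ k * k := le_trans Finset.card_image_le hScard
            exact Nat.mul_le_mul (Nat.choose_le_choose k h1) (Nat.choose_le_choose k h2)
      · -- maps to
        intro q hq
        rw [Finset.mem_coe, Finset.mem_filter] at hq
        obtain ⟨hqs, hqb⟩ := hq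
        rw [hs, Finset.mem_filter] at hqs
        obtain ⟨hmem, hdist⟩ := hqs
        simp only [Finset.mem_product] at hmem
        obtain ⟨⟨hA', hB'⟩, hC', hD'⟩ := hmem
        rw [Prod.ext_iff, Prod.ext_iff] at hqb
        obtain ⟨⟨hqA, hqB⟩, hmin⟩ := hqb
        simp only at hqA hqB hmin
        have hCne : q.2.1.Nonempty := hPne _ hC'
        have hDne : q.2.2.Nonempty := hPne _ hD'
        have hCmin : q.2.1.min' hCne = m := by
          have h := Finset.coe_min' hCne
          rw [hmin] at h
          exact Option.some_injective _ h
        have hsum : q.2.1 + q.2.2 = A + B := by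
          rw [← hqA, ← hqB]
          exact hdist.2.2.2.2.2.2.symm
        have hd1 : q.2.2.min' hDne = s₁ - m := by
          have h := min'_sumset q.2.1 q.2.2 hCne hDne
          rw [hCmin] at h
          have h2 : (q.2.1 + q.2.2).min' (hCne.add hDne) = s₁ :=
            min'_eq_of_eq hsum _ _
          omega
        rw [Finset.mem_coe, Finset.mem_product]
        constructor
        · rw [Finset.mem_powersetCard]
          refine ⟨?_, hPcard _ hC'⟩
          intro c hc
          rw [hT₁, Finset.mem_image]
          refine ⟨c + (s₁ - m), ?_, by ring⟩
          rw [← hsum]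
          have h3 := Finset.add_mem_add hc (Finset.min'_mem _ hDne)
          rwa [hd1] at h3
        · rw [Finset.mem_powersetCard]
          refine ⟨?_, hPcard _ hD'⟩
          intro d hd
          rw [hT₂, Finset.mem_image]
          refine ⟨m + d, ?_, by ring⟩
          rw [← hsum]
          have h3 := Finset.add_mem_add (Finset.min'_mem _ hCne) hd
          rwa [hCmin] at h3
      · -- injective
        intro q hq q' hq' heq
        rw [Finset.coe_filter, Set.mem_setOf_eq] at hq hq'
        have h1 : q.1 = q'.1 := by
          have e1 := hq.2
          have e2 := hq'.2
          rw [Prod.ext_iff, Prod.ext_iff] at e1 e2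
          exact Prod.ext (e1.1.1.trans e2.1.1.symm) (e1.1.2.trans e2.1.2.symm)
        have h2 : q.2 = q'.2 := Prod.ext (congrArg Prod.fst heq) (congrArg Prod.snd heq)
        exact Prod.ext h1 h2
    have hcard_t : t.card ≤ N ^ k * (N ^ k * N) := by
      rw [ht, Finset.card_product, Finset.card_product]
      have hPc : P.card = N.choose k := by
        rw [hP, Finset.card_powersetCard]
        congr 1
        rw [Int.card_Icc]
        simp
      have hIc : ((Finset.Icc (1 : ℤ) N).image (WithTop.some : ℤ → WithTop ℤ)).card = N := by
        have hinj : Function.Injective (WithTop.some : ℤ → WithTop ℤ) :=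
          fun a b h => by injection h
        rw [Finset.card_image_of_injective _ hinj, Int.card_Icc]; simp
      rw [hPc, hIc, mul_assoc]
      exact Nat.mul_le_mul (Nat.choose_le_pow _ _)
        (Nat.mul_le_mul_right _ (Nat.choose_le_pow _ _))
    calc s.card ≤ (K * K) * t.card :=
        Finset.card_le_mul_card_image_of_maps_to maps (K * K) fiber
      _ ≤ (K * K) * (N ^ k * (N ^ k * N)) := Nat.mul_le_mul_left _ hcard_t
      _ = (K * K) * N ^ (2 * k + 1) := by ring
  calc (((((P ×ˢ P) ×ˢ (P ×ˢ P)).filter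
          (fun q => q.1.1 ≠ q.1.2 ∧ q.1.1 ≠ q.2.1 ∧ q.1.1 ≠ q.2.2 ∧
                    q.1.2 ≠ q.2.1 ∧ q.1.2 ≠ q.2.2 ∧ q.2.1 ≠ q.2.2 ∧
                    q.1.1 + q.1.2 = q.2.1 + q.2.2)).card : ℝ))
      ≤ (((K * K) * (N ^ (2 * k + 1)) : ℕ) : ℝ) := by exact_mod_cast key
    _ = (K * K : ℕ) * (N : ℝ) ^ (2 * k + 1) := by push_cast; ring
end

section
/- For every k ≥ 2 there is a constant C_k such that the number of pairs (A, B) of distinct k-element subsets of {1,…,N} satisfying A + A = A + B or A + A = B + B is at most C_k · N^k. -/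
open Finset Pointwise

/-!
If `A + A = A + B`, or if `A + A = B + B` (which forces `min A = min B`), then
`min A + B ⊆ A + A`. Hence `B` is recovered from `A` and a `k`-subset of `A + A`, a set of at most
`k²` elements: each of the at most `N ^ k` sets `A` has at most `C(k², k)` partners `B`.
-/

namespace Finset

section OrderedCancel

variable {α : Type*} [AddCommMonoid α] [LinearOrder α] [IsOrderedCancelAddMonoid α]
  {A B : Finset α}

lemma min'_add_min'_le_of_mem_add (hA : A.Nonempty) {x : α} (hx : x ∈ A + A) :
    A.min' hA + A.min' hA ≤ x := by
  obtain ⟨a, ha, b, hb, rfl⟩ := mem_add.mp hx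
  exact add_le_add (min'_le A a ha) (min'_le A b hb)

lemma min'_le_min'_of_add_self_subset (hA : A.Nonempty) (hB : B.Nonempty) (h : B + B ⊆ A + A) :
    A.min' hA ≤ B.min' hB := by
  have hmin := min'_add_min'_le_of_mem_add hA (h (add_mem_add (B.min'_mem hB) (B.min'_mem hB)))
  by_contra! hlt
  exact (add_lt_add hlt hlt).not_ge hmin

lemma min'_eq_of_add_self_eq (hA : A.Nonempty) (hB : B.Nonempty) (h : A + A = B + B) :
    A.min' hA = B.min' hB :=
  (min'_le_min'_of_add_self_subset hA hB h.ge).antisymm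
    (min'_le_min'_of_add_self_subset hB hA h.le)

lemma min'_vadd_subset_add_self (hA : A.Nonempty) (hB : B.Nonempty)
    (h : A + A = A + B ∨ A + A = B + B) : A.min' hA +ᵥ B ⊆ A + A := by
  rcases h with h | h
  · exact h ▸ vadd_finset_subset_add (A.min'_mem hA)
  · rw [min'_eq_of_add_self_eq hA hB h, h]
    exact vadd_finset_subset_add (B.min'_mem hB)

end OrderedCancel

lemma card_le_choose_of_vadd_subset {α : Type*} [AddGroup α] [DecidableEq α]
    {𝒜 : Finset (Finset α)} {k : ℕ} (h𝒜 : ∀ B ∈ 𝒜, #B = k) (a : α) (S : Finset α)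
    (hS : ∀ B ∈ 𝒜, a +ᵥ B ⊆ S) : #𝒜 ≤ (#S).choose k := by
  rw [← card_powersetCard]
  refine card_le_card_of_injOn (a +ᵥ ·) (fun B hB ↦ ?_) (AddAction.injective a).injOn
  exact mem_powersetCard.mpr ⟨hS B hB, by rw [card_vadd_finset, h𝒜 B hB]⟩

variable {α : Type*} [AddCommGroup α] [LinearOrder α] [IsOrderedAddMonoid α]

lemma card_filter_add_self_eq_add_or_add_self_le {𝒮 : Finset (Finset α)} {k : ℕ} (hk : 0 < k)
    (h𝒮 : ∀ A ∈ 𝒮, #A = k) :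
    #{p ∈ 𝒮 ×ˢ 𝒮 | p.1 + p.1 = p.1 + p.2 ∨ p.1 + p.1 = p.2 + p.2} ≤ (k * k).choose k * #𝒮 := by
  refine card_le_mul_card_image_of_maps_to (f := Prod.fst) (fun p hp ↦ (mem_product.mp
    (mem_filter.mp hp).1).1) _ fun A hA ↦ ?_
  have hne : ∀ B ∈ 𝒮, B.Nonempty := fun B hB ↦ card_pos.mp (h𝒮 B hB ▸ hk)
  calc #{p ∈ {p ∈ 𝒮 ×ˢ 𝒮 | p.1 + p.1 = p.1 + p.2 ∨ p.1 + p.1 = p.2 + p.2} | p.1 = A}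
      ≤ #{B ∈ 𝒮 | A + A = A + B ∨ A + A = B + B} := by
        refine card_le_card_of_injOn Prod.snd (fun p hp ↦ ?_) fun p hp q hq hpq ↦ ?_
        · simp only [mem_coe, mem_filter, mem_product] at hp ⊢
          obtain ⟨⟨⟨-, hp2⟩, hrel⟩, rfl⟩ := hp
          exact ⟨hp2, hrel⟩
        · simp only [mem_coe, mem_filter] at hp hq
          exact Prod.ext (hp.2.trans hq.2.symm) hpq
    _ ≤ (#(A + A)).choose k :=
        card_le_choose_of_vadd_subset (fun B hB ↦ h𝒮 B (mem_filter.mp hB).1) _ _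
          fun B hB ↦ min'_vadd_subset_add_self (hne A hA) (hne B (mem_filter.mp hB).1)
            (mem_filter.mp hB).2
    _ ≤ (k * k).choose k :=
        Nat.choose_le_choose k (card_add_le.trans_eq (by rw [h𝒮 A hA]))

end Finset

theorem count_C2_upper (k : ℕ) (hk : 2 ≤ k) :
    ∃ C : ℝ, 0 < C ∧ ∀ N : ℕ,
      (((((Finset.Icc (1 : ℤ) N).powersetCard k) ×ˢ ((Finset.Icc (1 : ℤ) N).powersetCard k)).filter
        (fun p => p.1 ≠ p.2 ∧ (p.1 + p.1 = p.1 + p.2 ∨ p.1 + p.1 = p.2 + p.2))).card : ℝ) ≤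
        C * (N : ℝ) ^ k := by
  refine ⟨(k * k).choose k, mod_cast Nat.choose_pos (Nat.le_mul_self k), fun N ↦ ?_⟩
  set 𝒮 := (Icc (1 : ℤ) N).powersetCard k
  have h𝒮 : #𝒮 ≤ N ^ k := by
    simpa [𝒮, card_powersetCard] using Nat.choose_le_pow N k
  have hpairs := card_filter_add_self_eq_add_or_add_self_le (by omega : 0 < k)
    (fun A hA ↦ (mem_powersetCard.mp hA).2 : ∀ A ∈ 𝒮, #A = k)
  have hsub : #{p ∈ 𝒮 ×ˢ 𝒮 | p.1 ≠ p.2 ∧ (p.1 + p.1 = p.1 + p.2 ∨ p.1 + p.1 = p.2 + p.2)} ≤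
      #{p ∈ 𝒮 ×ˢ 𝒮 | p.1 + p.1 = p.1 + p.2 ∨ p.1 + p.1 = p.2 + p.2} :=
    card_le_card (monotone_filter_right _ fun _ _ hp ↦ hp.2)
  exact_mod_cast hsub.trans (hpairs.trans (Nat.mul_le_mul_left _ h𝒮))
end

section
/- Let k ≥ 2 and let A, B, C be k-element sets of integers with B ≠ C and A + B = A + C. Then the number of such triples (A, B, C) with all elements in {1,…,N} is at most C_k · N^{3k/2} for some constant C_k depending only on k. -/
/-!
Pick `c ∈ C \ B`. As `A + c ⊆ A + B`, every `a ∈ A` has a successor `a' ∈ A` with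
`a + c = a' + b` for some `b ∈ B`; running around a cycle of successors of length `L ≤ k` gives
`L • c ∈ L • B`, so `B` leaves only `O_k(1)` choices for `c`. Given `B` and `c`, every `a ∈ A` has
a neighbour `a + (c - b) ∈ A` with `c - b ≠ 0`, so `A` falls into at most `k / 2` clusters of
bounded diameter: `A` is a `k`-subset of `S + F` with `#S = k / 2` and `#F = O_k(1)`, leaving
`O_k(N^(k/2))` choices. Finally `C ⊆ A + B - A`, so there are `O_k(N^k · N^(k/2))` triples.
-/

open Finset Pointwise

section Cycle

variable {G : Type*} [AddCancelCommMonoid G] [DecidableEq G]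

theorem iterate_mem_and_add_nsmul_eq {A B : Finset G} {c : G} {f : G → G}
    (hf : ∀ a ∈ A, f a ∈ A ∧ ∃ b ∈ B, a + c = f a + b) (n : ℕ) :
    ∀ a ∈ A, f^[n] a ∈ A ∧ ∃ s ∈ n • B, a + n • c = f^[n] a + s := by
  induction n with
  | zero => exact fun a ha => ⟨ha, 0, by simp, by simp⟩
  | succ n ih =>
    intro a ha
    obtain ⟨hfa, b, hb, hab⟩ := hf a ha
    obtain ⟨hn, s, hs, has⟩ := ih (f a) hfa
    refine ⟨hn, s + b, by rw [succ_nsmul]; exact add_mem_add hs hb, ?_⟩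
    calc a + (n + 1) • c = (a + c) + n • c := by rw [succ_nsmul]; abel
      _ = (f a + n • c) + b := by rw [hab]; abel
      _ = f^[n + 1] a + (s + b) := by rw [has, Function.iterate_succ_apply]; abel

theorem exists_nsmul_mem_nsmul_of_forall_add_mem {A B : Finset G} {c : G} (hA : A.Nonempty)
    (h : ∀ a ∈ A, ∃ a' ∈ A, ∃ b ∈ B, a + c = a' + b) : ∃ L ∈ Icc 1 #A, L • c ∈ L • B := by
  choose! f hfA hf using h
  have hiter := iterate_mem_and_add_nsmul_eq fun a ha => ⟨hfA a ha, hf a ha⟩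
  obtain ⟨a₀, ha₀⟩ := hA
  obtain ⟨i, hi, j, hj, hij, hfij⟩ := exists_ne_map_eq_of_card_lt_of_maps_to
    (s := range (#A + 1)) (by simp) fun n _ => (hiter n a₀ ha₀).1
  wlog hlt : i < j generalizing i j
  · exact this j hj i hi hij.symm hfij.symm (by omega)
  have hj' : j ≤ #A := Nat.lt_succ_iff.mp (mem_range.mp hj)
  obtain ⟨-, s, hs, hcycle⟩ := hiter (j - i) _ (hiter i a₀ ha₀).1
  rw [← Function.iterate_add_apply, Nat.sub_add_cancel hlt.le, ← hfij] at hcycle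
  exact ⟨j - i, mem_Icc.mpr ⟨by omega, by omega⟩, add_left_cancel hcycle ▸ hs⟩

end Cycle

/-- The `c` with `L • c ∈ L • B` for some `1 ≤ L ≤ k`, recovered from `L • c` by exact division. -/
def sumsetAverages (k : ℕ) (B : Finset ℤ) : Finset ℤ :=
  (Icc 1 k).biUnion fun L => (L • B).image (· / (L : ℤ))

theorem mem_sumsetAverages {k L : ℕ} {B : Finset ℤ} {c : ℤ} (hL : L ∈ Icc 1 k)
    (hc : L • c ∈ L • B) : c ∈ sumsetAverages k B := by
  refine mem_biUnion.mpr ⟨L, hL, mem_image.mpr ⟨L • c, hc, ?_⟩⟩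
  rw [nsmul_eq_mul]
  exact Int.mul_ediv_cancel_left c (by have := (mem_Icc.mp hL).1; positivity)

theorem card_sumsetAverages_le {k : ℕ} {B : Finset ℤ} (hB : #B ≤ k) :
    #(sumsetAverages k B) ≤ k * k ^ k := by
  calc #(sumsetAverages k B) ≤ #(Icc 1 k) * k ^ k := by
        refine card_biUnion_le_card_mul _ _ _ fun L hL => ?_
        obtain ⟨hL1, hLk⟩ := mem_Icc.mp hL
        calc #((L • B).image (· / (L : ℤ))) ≤ #(L • B) := card_image_le
          _ ≤ #B ^ L := card_nsmul_le
          _ ≤ k ^ k := (Nat.pow_le_pow_left hB L).trans (Nat.pow_le_pow_right (by omega) hLk)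
    _ = k * k ^ k := by simp

theorem Finset.exists_lt_eq_succ_of_monotone {α : Type*} {s : ℕ → Finset α} (hs : Monotone s)
    {n : ℕ} (hn : #(s n) < #(s 0) + n) : ∃ j < n, s j = s (j + 1) := by
  induction n with
  | zero => omega
  | succ n ih =>
    by_cases hstable : s n = s (n + 1)
    · exact ⟨n, by omega, hstable⟩
    have hgrow : #(s n) < #(s (n + 1)) :=
      card_lt_card (ssubset_of_subset_of_ne (hs n.le_succ) hstable)
    obtain ⟨j, hj, hsj⟩ := ih (by omega)
    exact ⟨j, by omega, hsj⟩

section Cover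

variable {G : Type*} [AddCommGroup G] [DecidableEq G]

/-- The balls `{x ∈ A | x - a₀ ∈ j • D}` increase with `j` inside `A`, so they stabilise at some
`j < #A`, and a stable ball is closed under steps in `D`. -/
theorem exists_ball_closed {D A : Finset G} (hD : 0 ∈ D) {a₀ : G} (ha₀ : a₀ ∈ A) :
    ∃ j < #A, ∀ x ∈ A, ∀ y ∈ {x ∈ A | x - a₀ ∈ j • D}, x - y ∈ D →
      x ∈ {x ∈ A | x - a₀ ∈ j • D} := by
  set ball : ℕ → Finset G := fun j => {x ∈ A | x - a₀ ∈ j • D}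
  have hmono : Monotone ball := fun i j hij x hx => by
    simp only [ball, mem_filter] at hx ⊢
    exact ⟨hx.1, nsmul_subset_nsmul_right hD hij hx.2⟩
  have hcenter : a₀ ∈ ball 0 := by simp [ball, ha₀]
  obtain ⟨j, hj, hstable⟩ := exists_lt_eq_succ_of_monotone hmono (n := #A)
    (by have h₁ : #(ball #A) ≤ #A := card_le_card (filter_subset _ A)
        have h₂ : 0 < #(ball 0) := card_pos.mpr ⟨a₀, hcenter⟩
        omega)
  refine ⟨j, hj, fun x hx y hy hxy => ?_⟩
  have hx' : x ∈ ball (j + 1) := by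
    simp only [ball, mem_filter] at hy ⊢
    refine ⟨hx, ?_⟩
    rw [succ_nsmul, show x - a₀ = (y - a₀) + (x - y) by abel]
    exact add_mem_add hy.2 hxy
  rwa [← hstable] at hx'

/-- Peel off a closed ball around a point of `A`: it holds at least two points, and the rest of `A`
still satisfies the hypothesis, so one centre per ball suffices. -/
theorem exists_subset_two_mul_card_le_subset_add_nsmul {E : Finset G} (hE : (0 : G) ∉ E) :
    ∀ A : Finset G, (∀ a ∈ A, ∃ e ∈ E, a + e ∈ A) →
      ∃ S ⊆ A, 2 * #S ≤ #A ∧ A ⊆ S + #A • insert 0 (E ∪ -E) := by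
  intro A
  induction A using Finset.strongInduction with
  | H A ih =>
  intro hA
  rcases A.eq_empty_or_nonempty with rfl | ⟨a₀, ha₀⟩
  · exact ⟨∅, by simp⟩
  set D := insert 0 (E ∪ -E)
  obtain ⟨j, hj, hclosed⟩ := exists_ball_closed (mem_insert_self 0 (E ∪ -E)) ha₀
  set K := {x ∈ A | x - a₀ ∈ j • D}
  have ha₀K : a₀ ∈ K := by
    simp only [K, mem_filter, sub_self, ha₀, true_and]
    exact nsmul_subset_nsmul_right (mem_insert_self _ _) j.zero_le (by simp)
  have hK : 2 ≤ #K := by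
    obtain ⟨e, he, hae⟩ := hA a₀ ha₀
    have : a₀ + e ∈ K := hclosed _ hae a₀ ha₀K (by simp [he])
    refine one_lt_card.mpr ⟨a₀, ha₀K, a₀ + e, this, fun h => hE ?_⟩
    rwa [left_eq_add.mp h] at he
  have hrest : ∀ a ∈ A \ K, ∃ e ∈ E, a + e ∈ A \ K := by
    intro a ha
    obtain ⟨haA, haK⟩ := mem_sdiff.mp ha
    obtain ⟨e, he, hae⟩ := hA a haA
    refine ⟨e, he, mem_sdiff.mpr ⟨hae, fun haeK => haK (hclosed a haA _ haeK ?_)⟩⟩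
    simp [he]
  obtain ⟨S, hSA, hScard, hScover⟩ :=
    ih (A \ K) (sdiff_ssubset (filter_subset _ A) ⟨a₀, ha₀K⟩) hrest
  have ha₀S : a₀ ∉ S := fun h => (mem_sdiff.mp (hSA h)).2 ha₀K
  have hKA : K ⊆ A := filter_subset _ A
  have hcardK : #(A \ K) = #A - #K := card_sdiff_of_subset hKA
  refine ⟨insert a₀ S, insert_subset ha₀ (hSA.trans sdiff_subset), ?_, fun x hx => ?_⟩
  · have := card_le_card hKA
    rw [card_insert_of_notMem ha₀S]
    omega
  by_cases hxK : x ∈ K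
  · have : x = a₀ + (x - a₀) := by abel
    rw [this]
    exact add_mem_add (mem_insert_self _ _)
      (nsmul_subset_nsmul_right (mem_insert_self _ _) hj.le (mem_filter.mp hxK).2)
  · exact add_subset_add (subset_insert _ _)
      (nsmul_subset_nsmul_right (mem_insert_self _ _) (card_le_card sdiff_subset))
      (hScover (mem_sdiff.mpr ⟨hx, hxK⟩))

theorem card_insert_zero_union_neg_le (E : Finset G) : #(insert 0 (E ∪ -E)) ≤ 2 * #E + 1 := by
  calc #(insert 0 (E ∪ -E)) ≤ #(E ∪ -E) + 1 := card_insert_le _ _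
    _ ≤ #E + #(-E) + 1 := by gcongr; exact card_union_le _ _
    _ = 2 * #E + 1 := by rw [card_neg]; ring

theorem card_filter_forall_add_mem_le (U : Finset G) {E : Finset G} (hE : (0 : G) ∉ E) (k : ℕ) :
    #{A ∈ U.powersetCard k | ∀ a ∈ A, ∃ e ∈ E, a + e ∈ A} ≤
      (#U).choose (k / 2) * ((k / 2) * (2 * #E + 1) ^ k).choose k := by
  set F := k • insert 0 (E ∪ -E)
  have hF : #F ≤ (2 * #E + 1) ^ k :=
    card_nsmul_le.trans (Nat.pow_le_pow_left (card_insert_zero_union_neg_le E) k)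
  have hcover : {A ∈ U.powersetCard k | ∀ a ∈ A, ∃ e ∈ E, a + e ∈ A} ⊆
      (U.powersetCard (k / 2)).biUnion fun S => (S + F).powersetCard k := by
    intro A hA
    obtain ⟨hAU, hAk⟩ := mem_powersetCard.mp (mem_filter.mp hA).1
    obtain ⟨S₀, hS₀A, hS₀, hAS₀⟩ :=
      exists_subset_two_mul_card_le_subset_add_nsmul hE A (mem_filter.mp hA).2
    obtain ⟨S, hS₀S, hSA, hS⟩ := exists_subsuperset_card_eq hS₀A (n := k / 2) (by omega) (by omega)
    refine mem_biUnion.mpr ⟨S, mem_powersetCard.mpr ⟨hSA.trans hAU, hS⟩, ?_⟩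
    rw [hAk] at hAS₀
    exact mem_powersetCard.mpr ⟨hAS₀.trans (add_subset_add_right hS₀S), hAk⟩
  calc _ ≤ #(U.powersetCard (k / 2)) * ((k / 2) * (2 * #E + 1) ^ k).choose k :=
        (card_le_card hcover).trans (card_biUnion_le_card_mul _ _ _ fun S hS => by
          rw [card_powersetCard]
          refine Nat.choose_le_choose k (card_add_le.trans (Nat.mul_le_mul ?_ hF))
          exact (mem_powersetCard.mp hS).2.le)
    _ = _ := by rw [card_powersetCard]

end Cover

def collisionTriples (k : ℕ) (U : Finset ℤ) : Finset ((Finset ℤ × Finset ℤ) × Finset ℤ) :=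
  ((U.powersetCard k ×ˢ U.powersetCard k) ×ˢ U.powersetCard k).filter
    fun q => q.1.2 ≠ q.2 ∧ q.1.1 + q.1.2 = q.1.1 + q.2

theorem exists_of_mem_collisionTriples {k : ℕ} {U A B C : Finset ℤ}
    (h : ((A, B), C) ∈ collisionTriples k U) :
    ∃ c ∈ sumsetAverages k B \ B,
      (∀ a ∈ A, ∃ e ∈ B.image (c - ·), a + e ∈ A) ∧ C ⊆ A + B - A := by
  simp only [collisionTriples, mem_filter, mem_product, mem_powersetCard] at h
  obtain ⟨⟨⟨⟨-, hA⟩, ⟨-, hB⟩⟩, -, hC⟩, hBC, hsum⟩ := h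
  obtain ⟨c, hcC, hcB⟩ := not_subset.mp fun hCB : C ⊆ B =>
    hBC (eq_of_subset_of_card_le hCB (by omega)).symm
  have hAne : A.Nonempty := card_pos.mp (by have := card_pos.mpr ⟨c, hcC⟩; omega)
  have hshift : ∀ a ∈ A, ∃ a' ∈ A, ∃ b ∈ B, a + c = a' + b := fun a ha => by
    obtain ⟨a', ha', b, hb, hab⟩ := mem_add.mp (hsum ▸ add_mem_add ha hcC)
    exact ⟨a', ha', b, hb, hab.symm⟩
  obtain ⟨L, hL, hLc⟩ := exists_nsmul_mem_nsmul_of_forall_add_mem hAne hshift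
  refine ⟨c, mem_sdiff.mpr ⟨mem_sumsetAverages (hA ▸ hL) hLc, hcB⟩, fun a ha => ?_, fun x hx => ?_⟩
  · obtain ⟨a', ha', b, hb, hab⟩ := hshift a ha
    exact ⟨c - b, mem_image_of_mem _ hb, by rwa [show a + (c - b) = a' by omega]⟩
  · obtain ⟨a₀, ha₀⟩ := hAne
    rw [show x = a₀ + x - a₀ by ring, hsum]
    exact sub_mem_sub (add_mem_add ha₀ hx) ha₀

theorem card_collisionTriples_le (k : ℕ) (U : Finset ℤ) :
    #(collisionTriples k U) ≤ (#U).choose k * (k * k ^ k *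
      ((#U).choose (k / 2) * ((k / 2) * (2 * k + 1) ^ k).choose k * 2 ^ (k * k * k))) := by
  set P := U.powersetCard k
  have hcover : collisionTriples k U ⊆ P.biUnion fun B => (sumsetAverages k B \ B).biUnion
      fun c => {A ∈ P | ∀ a ∈ A, ∃ e ∈ B.image (c - ·), a + e ∈ A}.biUnion
        fun A => {(A, B)} ×ˢ (A + B - A).powerset := by
    rintro ⟨⟨A, B⟩, C⟩ h
    obtain ⟨c, hc, hA, hC⟩ := exists_of_mem_collisionTriples h
    have hP := mem_product.mp (mem_product.mp (mem_filter.mp h).1).1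
    simp only [mem_biUnion, mem_filter, mem_product, mem_singleton, mem_powerset]
    exact ⟨B, hP.2, c, hc, A, ⟨hP.1, hA⟩, rfl, hC⟩
  refine (card_le_card hcover).trans ?_
  rw [← card_powersetCard k U]
  refine card_biUnion_le_card_mul _ _ _ fun B hB => ?_
  have hBk := (mem_powersetCard.mp hB).2
  refine (card_biUnion_le_card_mul _ _ _ fun c hc => ?_).trans
    (Nat.mul_le_mul_right _ ((card_le_card sdiff_subset).trans (card_sumsetAverages_le hBk.le)))
  refine (card_biUnion_le_card_mul _ _ _ fun A hA => ?_).trans (Nat.mul_le_mul_right _ ?_)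
  · have hAk := (mem_powersetCard.mp (mem_filter.mp hA).1).2
    rw [card_product, card_singleton, one_mul, card_powerset]
    refine Nat.pow_le_pow_right two_pos (card_sub_le.trans ?_)
    calc #(A + B) * #A ≤ #A * #B * #A := Nat.mul_le_mul_right _ card_add_le
      _ = k * k * k := by rw [hAk, hBk]
  · have hE : (0 : ℤ) ∉ B.image (c - ·) := fun h0 => by
      obtain ⟨b, hb, hcb⟩ := mem_image.mp h0
      exact (mem_sdiff.mp hc).2 (by rwa [show c = b by omega])
    refine (card_filter_forall_add_mem_le U hE k).trans (Nat.mul_le_mul_left _ ?_)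
    exact Nat.choose_le_choose k (Nat.mul_le_mul_left _
      (Nat.pow_le_pow_left (by have := card_image_le (s := B) (f := (c - ·)); omega) k))

theorem pow_add_half_le_rpow (N k : ℕ) : (N : ℝ) ^ (k + k / 2) ≤ (N : ℝ) ^ (3 * (k : ℝ) / 2) := by
  rcases k.eq_zero_or_pos with rfl | hk
  · simp
  rcases N.eq_zero_or_pos with rfl | hN
  · rw [Nat.cast_zero, zero_pow (by omega), Real.zero_rpow (by positivity)]
  rw [← Real.rpow_natCast]
  refine Real.rpow_le_rpow_of_exponent_le (by exact_mod_cast hN) ?_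
  have : ((k / 2 : ℕ) : ℝ) ≤ k / 2 := Nat.cast_div_le
  push_cast
  linarith

theorem count_C3_upper_general (k : ℕ) :
    ∃ C : ℝ, 0 < C ∧ ∀ N : ℕ,
      ((((((Finset.Icc (1 : ℤ) N).powersetCard k) ×ˢ ((Finset.Icc (1 : ℤ) N).powersetCard k)) ×ˢ
          ((Finset.Icc (1 : ℤ) N).powersetCard k)).filter
        (fun q => q.1.2 ≠ q.2 ∧ q.1.1 + q.1.2 = q.1.1 + q.2)).card : ℝ) ≤
        C * (N : ℝ) ^ ((3 * (k : ℝ)) / 2) := by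
  set M := k * k ^ k * (((k / 2) * (2 * k + 1) ^ k).choose k * 2 ^ (k * k * k))
  refine ⟨M + 1, by positivity, fun N => ?_⟩
  have hcount : #(collisionTriples k (Icc 1 N)) ≤ M * N ^ (k + k / 2) := by
    refine (card_collisionTriples_le k _).trans ?_
    rw [Int.card_Icc, add_sub_cancel_right, Int.toNat_natCast]
    calc _ ≤ N ^ k * (k * k ^ k * (N ^ (k / 2) * ((k / 2) * (2 * k + 1) ^ k).choose k *
          2 ^ (k * k * k))) := by gcongr <;> exact Nat.choose_le_pow _ _
      _ = M * N ^ (k + k / 2) := by ring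
  calc (#(collisionTriples k (Icc 1 N)) : ℝ) ≤ M * (N : ℝ) ^ (k + k / 2) := by
        exact_mod_cast hcount
    _ ≤ (M + 1) * (N : ℝ) ^ (3 * (k : ℝ) / 2) := by
        gcongr
        · linarith
        · exact pow_add_half_le_rpow N k

theorem count_C3_upper (k : ℕ) (hk : 2 ≤ k) :
    ∃ C : ℝ, 0 < C ∧ ∀ N : ℕ,
      ((((((Finset.Icc (1 : ℤ) N).powersetCard k) ×ˢ ((Finset.Icc (1 : ℤ) N).powersetCard k)) ×ˢ
          ((Finset.Icc (1 : ℤ) N).powersetCard k)).filter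
        (fun q => q.1.2 ≠ q.2 ∧ q.1.1 + q.1.2 = q.1.1 + q.2)).card : ℝ) ≤
        C * (N : ℝ) ^ ((3 * (k : ℝ)) / 2) :=
  count_C3_upper_general k
end

section
/- There is a constant c_k > 0 such that the number of quadruples (A₁, A₂, B₁, B₂) of k-element subsets of {1,…,N}, where A₁ and A₂ have distinct distance sets (A₁ - min A₁ ≠ A₂ - min A₂), B₁ - min B₁ = A₁ - min A₁, B₂ - min B₂ = A₂ - min A₂, the four minima min A₁, min A₂, min B₁, min B₂ are pairwise distinct, and A₁ + A₂ = B₁ + B₂, is at least c_k · N^{2k+1} for all sufficiently large N. -/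
open Finset Pointwise

/-- The minimum of a finite set of integers (with junk value `0` for the empty set). -/
def minOf (A : Finset ℤ) : ℤ := A.min.getD 0

/-- The distance set of a finite set of integers: the set translated so its minimum is `0`. -/
def distSet (A : Finset ℤ) : Finset ℤ := A.image (fun x => x - minOf A)

open scoped Nat

/-!
Fix two distinct shapes `D₁ ≠ D₂`, i.e. `k`-subsets of `[0, M]` containing `0`, and translates
`a ∈ (4M, 5M]`, `b ∈ [1, M]`, `b' ∈ (M, 2M]`. Then
`(a + D₁) + (b + D₂) = (b' + D₁) + ((a + b - b') + D₂)`, since both sides are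
`(a + b) + (D₁ + D₂)`. The four minima `a, b, b', a + b - b'` are pairwise distinct because of
the choice of ranges, all four sets lie in `[1, 6M]`, and a translate `t + D` of a shape
determines `t` and `D`. With `M = ⌊N / 6⌋` this gives `(C(M, k-1)² - C(M, k-1)) M³ ≫ N^(2k+1)`
distinct admissible quadruples.
-/

lemma minOf_eq_min' {A : Finset ℤ} (hA : A.Nonempty) : minOf A = A.min' hA := by
  rw [minOf, ← coe_min' hA]
  rfl

lemma minOf_eq_of_mem_of_le {A : Finset ℤ} {m : ℤ} (hm : m ∈ A) (h : ∀ x ∈ A, m ≤ x) :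
    minOf A = m := by
  rw [minOf_eq_min' ⟨m, hm⟩]
  exact le_antisymm (min'_le A m hm) (le_min' A _ m h)

lemma minOf_vadd (t : ℤ) {D : Finset ℤ} (hD : D.Nonempty) : minOf (t +ᵥ D) = t + minOf D := by
  rw [minOf_eq_min' hD]
  refine minOf_eq_of_mem_of_le (vadd_mem_vadd_finset (min'_mem D hD)) fun x hx => ?_
  obtain ⟨y, hy, rfl⟩ := mem_vadd_finset.1 hx
  exact (add_le_add_iff_left t).2 (min'_le D y hy)

lemma distSet_vadd (t : ℤ) (D : Finset ℤ) : distSet (t +ᵥ D) = distSet D := by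
  rcases D.eq_empty_or_nonempty with rfl | hD
  · simp [distSet]
  rw [distSet, distSet, minOf_vadd t hD, vadd_finset_def, image_image]
  congr 1
  funext x
  simp only [Function.comp_apply, vadd_eq_add]
  ring

lemma distSet_eq_self {D : Finset ℤ} (hD : minOf D = 0) : distSet D = D := by
  simp [distSet, hD]

lemma eq_and_eq_of_vadd_eq_vadd {t₁ t₂ : ℤ} {D₁ D₂ : Finset ℤ} (hD₁ : D₁.Nonempty)
    (hD₂ : D₂.Nonempty) (h₁ : minOf D₁ = 0) (h₂ : minOf D₂ = 0) (h : t₁ +ᵥ D₁ = t₂ +ᵥ D₂) :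
    t₁ = t₂ ∧ D₁ = D₂ := by
  have hmin := congrArg minOf h
  have hdist := congrArg distSet h
  rw [minOf_vadd t₁ hD₁, minOf_vadd t₂ hD₂, h₁, h₂] at hmin
  rw [distSet_vadd, distSet_vadd, distSet_eq_self h₁, distSet_eq_self h₂] at hdist
  exact ⟨by simpa using hmin, hdist⟩

lemma vadd_mem_powersetCard_Icc {D : Finset ℤ} {t M N : ℤ} {k : ℕ} (hD : D ⊆ Icc 0 M)
    (hDk : #D = k) (ht : 1 ≤ t) (htM : t + M ≤ N) : t +ᵥ D ∈ (Icc 1 N).powersetCard k := by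
  refine mem_powersetCard.2 ⟨fun x hx => ?_, by rw [card_vadd_finset, hDk]⟩
  obtain ⟨y, hy, rfl⟩ := mem_vadd_finset.1 hx
  have := mem_Icc.1 (hD hy)
  simp only [mem_Icc, vadd_eq_add]
  omega

lemma two_le_choose {n r : ℕ} (hr₀ : 0 < r) (hrn : r < n) : 2 ≤ n.choose r := by
  obtain ⟨m, rfl⟩ : ∃ m, n = m + 1 := ⟨n - 1, by omega⟩
  obtain ⟨s, rfl⟩ : ∃ s, r = s + 1 := ⟨r - 1, by omega⟩
  have h₁ := Nat.choose_pos (n := m) (k := s) (by omega)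
  have h₂ := Nat.choose_pos (n := m) (k := s + 1) (by omega)
  rw [Nat.choose_succ_succ']
  omega

lemma pow_le_two_pow_mul_factorial_mul_choose {n r : ℕ} (h : 2 * r ≤ n + 2) :
    n ^ r ≤ 2 ^ r * r ! * n.choose r :=
  calc n ^ r ≤ (2 * (n + 1 - r)) ^ r := Nat.pow_le_pow_left (by omega) r
    _ = 2 ^ r * (n + 1 - r) ^ r := mul_pow ..
    _ ≤ 2 ^ r * (r ! * n.choose r) := by
      rw [← Nat.descFactorial_eq_factorial_mul_choose]
      exact Nat.mul_le_mul_left _ (Nat.pow_sub_le_descFactorial n r)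
    _ = 2 ^ r * r ! * n.choose r := (mul_assoc ..).symm

/-- The `k`-subsets of `[0, M]` with minimum `0`. -/
noncomputable def normalizedSets (M k : ℕ) : Finset (Finset ℤ) :=
  ((Icc (1 : ℤ) M).powersetCard (k - 1)).image (insert 0)

section normalizedSets

variable {M k : ℕ} {D : Finset ℤ}

lemma card_normalizedSets : #(normalizedSets M k) = M.choose (k - 1) := by
  rw [normalizedSets, card_image_of_injOn, card_powersetCard, Int.card_Icc]
  · simp
  intro S hS T hT hST
  have h0 : ∀ S ∈ ((Icc (1 : ℤ) M).powersetCard (k - 1) : Set (Finset ℤ)), (0 : ℤ) ∉ S :=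
    fun S hS h => by simpa using (mem_powersetCard.1 hS).1 h
  simpa [erase_insert (h0 S hS), erase_insert (h0 T hT)] using congrArg (erase · 0) hST

lemma zero_mem_of_mem_normalizedSets (hD : D ∈ normalizedSets M k) : 0 ∈ D := by
  obtain ⟨S, -, rfl⟩ := mem_image.1 hD
  exact mem_insert_self 0 S

lemma subset_Icc_of_mem_normalizedSets (hD : D ∈ normalizedSets M k) : D ⊆ Icc 0 (M : ℤ) := by
  obtain ⟨S, hS, rfl⟩ := mem_image.1 hD
  refine insert_subset (by simp) ((mem_powersetCard.1 hS).1.trans (Icc_subset_Icc ?_ le_rfl))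
  exact zero_le_one

lemma minOf_of_mem_normalizedSets (hD : D ∈ normalizedSets M k) : minOf D = 0 :=
  minOf_eq_of_mem_of_le (zero_mem_of_mem_normalizedSets hD) fun _ hx =>
    (mem_Icc.1 (subset_Icc_of_mem_normalizedSets hD hx)).1

lemma card_of_mem_normalizedSets (hk : 1 ≤ k) (hD : D ∈ normalizedSets M k) : #D = k := by
  obtain ⟨S, hS, rfl⟩ := mem_image.1 hD
  obtain ⟨hSM, hSk⟩ := mem_powersetCard.1 hS
  rw [card_insert_of_notMem fun h => by simpa using hSM h, hSk]
  omega

end normalizedSets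

/-- Verbatim the set counted in `count_Cprime_lower`. -/
noncomputable def goodQuadruples (N k : ℕ) : Finset ((Finset ℤ × Finset ℤ) × (Finset ℤ × Finset ℤ)) :=
  (((((Finset.Icc (1 : ℤ) N).powersetCard k) ×ˢ ((Finset.Icc (1 : ℤ) N).powersetCard k)) ×ˢ
      (((Finset.Icc (1 : ℤ) N).powersetCard k) ×ˢ ((Finset.Icc (1 : ℤ) N).powersetCard k))).filter
    (fun q => distSet q.1.1 ≠ distSet q.1.2 ∧
              distSet q.2.1 = distSet q.1.1 ∧
              distSet q.2.2 = distSet q.1.2 ∧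
              minOf q.1.1 ≠ minOf q.1.2 ∧ minOf q.1.1 ≠ minOf q.2.1 ∧
              minOf q.1.1 ≠ minOf q.2.2 ∧ minOf q.1.2 ≠ minOf q.2.1 ∧
              minOf q.1.2 ≠ minOf q.2.2 ∧ minOf q.2.1 ≠ minOf q.2.2 ∧
              q.1.1 + q.1.2 = q.2.1 + q.2.2))

noncomputable def quadParams (M k : ℕ) : Finset ((Finset ℤ × Finset ℤ) × ℤ × ℤ × ℤ) :=
  (normalizedSets M k).offDiag ×ˢ
    (Icc (4 * M + 1 : ℤ) (5 * M) ×ˢ Icc (1 : ℤ) M ×ˢ Icc (M + 1 : ℤ) (2 * M))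

noncomputable def quadOf :
    (Finset ℤ × Finset ℤ) × ℤ × ℤ × ℤ → (Finset ℤ × Finset ℤ) × (Finset ℤ × Finset ℤ)
  | ((D₁, D₂), a, b, b') => ((a +ᵥ D₁, b +ᵥ D₂), (b' +ᵥ D₁, (a + b - b') +ᵥ D₂))

section quadParams

variable {M k : ℕ}

lemma card_quadParams :
    #(quadParams M k) = (M.choose (k - 1) * M.choose (k - 1) - M.choose (k - 1)) * M ^ 3 := by
  simp only [quadParams, card_product, offDiag_card, card_normalizedSets, Int.card_Icc]
  congr 1
  have h₁ : ((5 * M + 1 - (4 * M + 1) : ℤ)).toNat = M := by omega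
  have h₂ : ((M + 1 - 1 : ℤ)).toNat = M := by omega
  have h₃ : ((2 * M + 1 - (M + 1) : ℤ)).toNat = M := by omega
  rw [h₁, h₂, h₃]
  ring

lemma injOn_quadOf : Set.InjOn quadOf (quadParams M k) := by
  rintro ⟨⟨D₁, D₂⟩, a, b, b'⟩ hp ⟨⟨E₁, E₂⟩, x, y, z⟩ hq h
  simp only [quadParams, coe_product, Set.mem_prod, mem_coe, mem_offDiag] at hp hq
  obtain ⟨⟨hD₁, hD₂, -⟩, -⟩ := hp
  obtain ⟨⟨hE₁, hE₂, -⟩, -⟩ := hq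
  simp only [quadOf, Prod.mk.injEq] at h
  obtain ⟨⟨h₁, h₂⟩, h₃, -⟩ := h
  have cancel {t u : ℤ} {D E : Finset ℤ} (hD : D ∈ normalizedSets M k)
      (hE : E ∈ normalizedSets M k) (h : t +ᵥ D = u +ᵥ E) : t = u ∧ D = E :=
    eq_and_eq_of_vadd_eq_vadd ⟨0, zero_mem_of_mem_normalizedSets hD⟩
      ⟨0, zero_mem_of_mem_normalizedSets hE⟩ (minOf_of_mem_normalizedSets hD)
      (minOf_of_mem_normalizedSets hE) h
  obtain ⟨rfl, rfl⟩ := cancel hD₁ hE₁ h₁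
  obtain ⟨rfl, rfl⟩ := cancel hD₂ hE₂ h₂
  obtain ⟨rfl, -⟩ := cancel hD₁ hE₁ h₃
  rfl

lemma quadOf_mem_goodQuadruples {N : ℕ} (hk : 1 ≤ k) (hN : 6 * M ≤ N)
    {p : (Finset ℤ × Finset ℤ) × ℤ × ℤ × ℤ} (hp : p ∈ quadParams M k) :
    quadOf p ∈ goodQuadruples N k := by
  obtain ⟨⟨D₁, D₂⟩, a, b, b'⟩ := p
  simp only [quadParams, mem_product, mem_offDiag, mem_Icc] at hp
  obtain ⟨⟨hD₁, hD₂, hD₁₂⟩, ⟨ha, ha'⟩, ⟨hb, hb'⟩, hc, hc'⟩ := hp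
  have mem {t : ℤ} {D : Finset ℤ} (hD : D ∈ normalizedSets M k) (ht : 1 ≤ t) (ht' : t ≤ 5 * M) :
      t +ᵥ D ∈ (Icc (1 : ℤ) N).powersetCard k :=
    vadd_mem_powersetCard_Icc (subset_Icc_of_mem_normalizedSets hD)
      (card_of_mem_normalizedSets hk hD) ht (by omega)
  have minOf_translate {t : ℤ} {D : Finset ℤ} (hD : D ∈ normalizedSets M k) : minOf (t +ᵥ D) = t := by
    rw [minOf_vadd t ⟨0, zero_mem_of_mem_normalizedSets hD⟩, minOf_of_mem_normalizedSets hD,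
      add_zero]
  have hsum : (a +ᵥ D₁) + (b +ᵥ D₂) = (b' +ᵥ D₁) + ((a + b - b') +ᵥ D₂) := by
    rw [vadd_add_vadd, vadd_add_vadd, add_sub_cancel]
  simp only [goodQuadruples, quadOf, mem_filter, mem_product, distSet_vadd,
    distSet_eq_self (minOf_of_mem_normalizedSets hD₁),
    distSet_eq_self (minOf_of_mem_normalizedSets hD₂), minOf_translate hD₁, minOf_translate hD₂]
  refine ⟨⟨⟨mem hD₁ (by omega) ha', mem hD₂ hb (by omega)⟩, mem hD₁ (by omega) (by omega),
    mem hD₂ (by omega) (by omega)⟩, hD₁₂, trivial, trivial, ?_, ?_, ?_, ?_, ?_, ?_, hsum⟩ <;> omega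

lemma card_quadParams_le {N : ℕ} (hk : 1 ≤ k) (hN : 6 * M ≤ N) :
    #(quadParams M k) ≤ #(goodQuadruples N k) :=
  card_le_card_of_injOn quadOf (fun _ hp => quadOf_mem_goodQuadruples hk hN hp) injOn_quadOf

lemma pow_le_mul_card_quadParams (hk : 2 ≤ k) (hM : 2 * k ≤ M) :
    M ^ (2 * k + 1) ≤ 2 * (2 ^ (k - 1) * (k - 1)!) ^ 2 * #(quadParams M k) := by
  set n := M.choose (k - 1)
  have hn : 2 ≤ n := two_le_choose (by omega) (by omega)
  have hn_sq : n * n ≤ 2 * (n * n - n) := by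
    have : 2 * n ≤ n * n := Nat.mul_le_mul_right n hn
    omega
  have hpow : M ^ (k - 1) ≤ 2 ^ (k - 1) * (k - 1)! * n :=
    pow_le_two_pow_mul_factorial_mul_choose (by omega)
  rw [card_quadParams]
  calc M ^ (2 * k + 1) = (M ^ (k - 1)) ^ 2 * M ^ 3 := by
        rw [← pow_mul, ← pow_add]
        congr 1
        omega
    _ ≤ (2 ^ (k - 1) * (k - 1)! * n) ^ 2 * M ^ 3 := by gcongr
    _ = (2 ^ (k - 1) * (k - 1)!) ^ 2 * (n * n) * M ^ 3 := by ring
    _ ≤ (2 ^ (k - 1) * (k - 1)!) ^ 2 * (2 * (n * n - n)) * M ^ 3 := by gcongr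
    _ = 2 * (2 ^ (k - 1) * (k - 1)!) ^ 2 * ((n * n - n) * M ^ 3) := by ring

end quadParams

theorem count_Cprime_lower (k : ℕ) (hk : 2 ≤ k) :
    ∃ c : ℝ, 0 < c ∧ ∃ N₀ : ℕ, ∀ N : ℕ, N₀ ≤ N →
      c * (N : ℝ) ^ (2 * k + 1) ≤
      ((((((Finset.Icc (1 : ℤ) N).powersetCard k) ×ˢ ((Finset.Icc (1 : ℤ) N).powersetCard k)) ×ˢ
          (((Finset.Icc (1 : ℤ) N).powersetCard k) ×ˢ ((Finset.Icc (1 : ℤ) N).powersetCard k))).filter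
        (fun q => distSet q.1.1 ≠ distSet q.1.2 ∧
                  distSet q.2.1 = distSet q.1.1 ∧
                  distSet q.2.2 = distSet q.1.2 ∧
                  minOf q.1.1 ≠ minOf q.1.2 ∧ minOf q.1.1 ≠ minOf q.2.1 ∧
                  minOf q.1.1 ≠ minOf q.2.2 ∧ minOf q.1.2 ≠ minOf q.2.1 ∧
                  minOf q.1.2 ≠ minOf q.2.2 ∧ minOf q.2.1 ≠ minOf q.2.2 ∧
                  q.1.1 + q.1.2 = q.2.1 + q.2.2)).card : ℝ) := by
  set K : ℕ := 7 ^ (2 * k + 1) * (2 * (2 ^ (k - 1) * (k - 1)!) ^ 2)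
  have hK : (0 : ℝ) < K := by positivity
  refine ⟨1 / K, one_div_pos.2 hK, 12 * k + 36, fun N hN => ?_⟩
  set M := N / 6
  have hbound : N ^ (2 * k + 1) ≤ K * #(goodQuadruples N k) :=
    calc N ^ (2 * k + 1) ≤ (7 * M) ^ (2 * k + 1) := Nat.pow_le_pow_left (by omega) _
      _ = 7 ^ (2 * k + 1) * M ^ (2 * k + 1) := mul_pow ..
      _ ≤ 7 ^ (2 * k + 1) * (2 * (2 ^ (k - 1) * (k - 1)!) ^ 2 * #(quadParams M k)) :=
        Nat.mul_le_mul_left _ (pow_le_mul_card_quadParams hk (by omega))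
      _ ≤ K * #(goodQuadruples N k) := by
        rw [← mul_assoc]
        exact Nat.mul_le_mul_left _ (card_quadParams_le (by omega) (by omega))
  calc 1 / (K : ℝ) * N ^ (2 * k + 1) ≤ 1 / K * (K * #(goodQuadruples N k)) := by
        gcongr
        exact_mod_cast hbound
    _ = #(goodQuadruples N k) := by field_simp
end

section
/- Let k, g ≥ 2. If 𝒜 is a family of k-element subsets of {1,…,N} such that every set S of integers has at most g representations as a sumset A + B with A, B ∈ 𝒜 (counting unordered multisets {A,B}), then |𝒜| ≤ C_k · √g · N^{k - 1/2} for some constant C_k depending only on k. -/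
/-!
Every ordered pair `(A, B)` of `𝒜` produces a sumset, and since each sumset arises from at most
`g` unordered pairs, hence at most `2g` ordered ones, `|𝒜|² ≤ 2g · #{A + B}`. On the other hand
`A + B = (A - min A) + (B - min B) + (min A + min B)`, where each normalized set is `0` together
with `k - 1` elements of `[1, N]`, and `min A + min B ∈ [2, 2N]`; so there are at most
`2N · N^{2(k-1)}` sumsets. Hence `|𝒜|² ≤ 4g N^{2k-1}`, i.e. the theorem with `C_k = 2`.
-/

open Finset Pointwise

theorem Finset.card_le_two_mul_card_image_sym2 {α : Type*} [DecidableEq α] (F : Finset (α × α)) :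
    #F ≤ 2 * #(F.image fun p => s(p.1, p.2)) := by
  refine card_le_mul_card_image F 2 fun z hz => ?_
  obtain ⟨q, -, rfl⟩ := mem_image.mp hz
  have hfiber : {p ∈ F | s(p.1, p.2) = s(q.1, q.2)} ⊆ {q, q.swap} := fun p hp => by
    rcases Sym2.mk_eq_mk_iff.mp (mem_filter.mp hp).2 with rfl | rfl <;> simp
  exact (card_le_card hfiber).trans card_le_two

theorem Finset.card_sq_le_two_mul_card_image_add {α : Type*} [DecidableEq α] [Add α]
    (𝒜 : Finset α) (g : ℕ)
    (hrep : ∀ S : α, #(((𝒜 ×ˢ 𝒜).filter fun p => p.1 + p.2 = S).image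
      fun p => s(p.1, p.2)) ≤ g) :
    #𝒜 ^ 2 ≤ 2 * g * #((𝒜 ×ˢ 𝒜).image fun p => p.1 + p.2) := by
  rw [sq, ← card_product]
  refine card_le_mul_card_image _ _ fun S _ => ?_
  exact (card_le_two_mul_card_image_sym2 _).trans (Nat.mul_le_mul_left 2 (hrep S))

theorem Finset.exists_eq_insert_zero_add_singleton {N : ℕ} {A : Finset ℤ}
    (hA : A ⊆ Icc 1 (N : ℤ)) (hne : A.Nonempty) :
    ∃ a ∈ Icc 1 (N : ℤ), ∃ P ∈ powersetCard (#A - 1) (Icc 1 (N : ℤ)), A = insert 0 P + {a} := by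
  set a := A.min' hne
  have ha : a ∈ A := min'_mem A hne
  refine ⟨a, hA ha, (A.erase a).image (· - a), mem_powersetCard.mpr ⟨?_, ?_⟩, ?_⟩
  · intro x hx
    obtain ⟨y, hy, rfl⟩ := mem_image.mp hx
    have hay : a < y := lt_of_le_of_ne (min'_le A y (mem_of_mem_erase hy)) (ne_of_mem_erase hy).symm
    have hyN := mem_Icc.mp (hA (mem_of_mem_erase hy))
    have haN := mem_Icc.mp (hA ha)
    rw [mem_Icc]
    omega
  · rw [card_image_of_injective _ sub_left_injective, card_erase_of_mem ha]
  · ext x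
    simp only [mem_add, mem_insert, mem_image, mem_erase, mem_singleton]
    constructor
    · intro hx
      by_cases hxa : x = a
      · exact ⟨0, Or.inl rfl, a, rfl, by simp [hxa]⟩
      · exact ⟨x - a, Or.inr ⟨x, ⟨hxa, hx⟩, rfl⟩, a, rfl, by ring⟩
    · rintro ⟨y, rfl | ⟨z, ⟨-, hz⟩, rfl⟩, _, rfl, rfl⟩
      · simpa using ha
      · simpa using hz

theorem Finset.card_image_add_le_of_subset_Icc {k N : ℕ} (hk : 1 ≤ k) (𝒜 : Finset (Finset ℤ))
    (h𝒜 : ∀ A ∈ 𝒜, A ⊆ Icc 1 (N : ℤ) ∧ #A = k) :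
    #((𝒜 ×ˢ 𝒜).image fun p => p.1 + p.2) ≤ 2 * N ^ (2 * k - 1) := by
  set shapes := powersetCard (k - 1) (Icc 1 (N : ℤ))
  have hsub : (𝒜 ×ˢ 𝒜).image (fun p => p.1 + p.2) ⊆ (Icc 2 (2 * N : ℤ) ×ˢ shapes ×ˢ shapes).image
      fun q => insert 0 q.2.1 + insert 0 q.2.2 + {q.1} := by
    simp only [subset_iff, mem_image, mem_product, Prod.exists]
    rintro _ ⟨A, B, ⟨hA, hB⟩, rfl⟩
    obtain ⟨hAN, hAk⟩ := h𝒜 A hA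
    obtain ⟨hBN, hBk⟩ := h𝒜 B hB
    obtain ⟨a, ha, P, hP, rfl⟩ := exists_eq_insert_zero_add_singleton hAN (card_pos.mp (by omega))
    obtain ⟨b, hb, Q, hQ, rfl⟩ := exists_eq_insert_zero_add_singleton hBN (card_pos.mp (by omega))
    rw [hAk] at hP
    rw [hBk] at hQ
    rw [mem_Icc] at ha hb
    refine ⟨a + b, P, Q, ⟨mem_Icc.mpr ⟨by omega, by omega⟩, hP, hQ⟩, ?_⟩
    rw [add_add_add_comm, singleton_add_singleton]
  have hshapes : #shapes ≤ N ^ (k - 1) := by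
    simpa [shapes, card_powersetCard] using Nat.choose_le_pow N (k - 1)
  calc #((𝒜 ×ˢ 𝒜).image fun p => p.1 + p.2)
      ≤ #(Icc 2 (2 * N : ℤ)) * (#shapes * #shapes) := by
        simpa only [card_product] using (card_le_card hsub).trans card_image_le
    _ ≤ 2 * N * (N ^ (k - 1) * N ^ (k - 1)) := by
      gcongr
      simp only [Int.card_Icc]
      omega
    _ = 2 * N ^ (2 * k - 1) := by
      rw [mul_assoc, ← pow_add, ← pow_succ']
      congr 2
      omega

theorem Real.sqrt_pow_two_mul_sub_one {x : ℝ} (hx : 0 ≤ x) {k : ℕ} (hk : 1 ≤ k) :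
    √(x ^ (2 * k - 1)) = x ^ ((k : ℝ) - 1 / 2) := by
  rw [sqrt_eq_rpow, ← rpow_natCast_mul hx]
  push_cast [Nat.cast_sub (by omega : 1 ≤ 2 * k)]
  ring_nf

theorem B2g_system_upper (k : ℕ) (hk : 2 ≤ k) :
    ∃ C : ℝ, 0 < C ∧ ∀ (g N : ℕ), 2 ≤ g → ∀ 𝒜 : Finset (Finset ℤ),
      (∀ A ∈ 𝒜, A ⊆ Finset.Icc (1 : ℤ) N ∧ A.card = k) →
      (∀ S : Finset ℤ,
        (((𝒜 ×ˢ 𝒜).filter (fun p : Finset ℤ × Finset ℤ => p.1 + p.2 = S)).image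
          (fun p : Finset ℤ × Finset ℤ => Sym2.mk p.1 p.2)).card ≤ g) →
      (𝒜.card : ℝ) ≤ C * Real.sqrt g * (N : ℝ) ^ ((k : ℝ) - 1 / 2) := by
  refine ⟨2, two_pos, fun g N _ 𝒜 h𝒜 hrep => ?_⟩
  have hcard : #𝒜 ^ 2 ≤ 4 * g * N ^ (2 * k - 1) := by
    have := (card_sq_le_two_mul_card_image_add 𝒜 g hrep).trans
      (Nat.mul_le_mul_left (2 * g) (card_image_add_le_of_subset_Icc (by omega) 𝒜 h𝒜))
    linarith
  calc (#𝒜 : ℝ) = √((#𝒜 : ℝ) ^ 2) := (Real.sqrt_sq (Nat.cast_nonneg _)).symm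
    _ ≤ √(4 * g * (N : ℝ) ^ (2 * k - 1)) := Real.sqrt_le_sqrt (by exact_mod_cast hcard)
    _ = 2 * √g * (N : ℝ) ^ ((k : ℝ) - 1 / 2) := by
      rw [Real.sqrt_mul (by positivity), Real.sqrt_mul (by positivity),
        Real.sqrt_pow_two_mul_sub_one (Nat.cast_nonneg N) (by omega),
        show (4 : ℝ) = 2 ^ 2 by norm_num, Real.sqrt_sq zero_le_two]
end

section
/- Let X = {0 < x < x'}, Y, V, W be 3-element sets of nonnegative integers each containing 0, with X lexicographically minimal among all four, and suppose X + Y = V + W with X = Y ≺ V = W in lexicographic order (X strictly precedes V). Then this is impossible: there are no such sets, i.e., X + X = V + V with X ≠ V and both containing 0 as a 3-set with distinct elements implies X = V. -/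
open Finset Pointwise

private lemma erase_card2 {X : Finset ℤ} (hX : X.card = 3) (h0X : (0:ℤ) ∈ X) :
    (X.erase 0).card = 2 := by
  rw [Finset.card_erase_of_mem h0X, hX]

private lemma le_aux (X V : Finset ℤ)
    (hX : X.card = 3) (hV : V.card = 3)
    (h0X : (0 : ℤ) ∈ X) (h0V : (0 : ℤ) ∈ V)
    (hXnn : ∀ x ∈ X, 0 ≤ x) (hVnn : ∀ x ∈ V, 0 ≤ x)
    (heq : X + X ⊆ V + V) :
    (V.erase 0).min' (Finset.card_pos.mp (by rw [erase_card2 hV h0V]; norm_num)) ≤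
      (X.erase 0).min' (Finset.card_pos.mp (by rw [erase_card2 hX h0X]; norm_num)) ∧
    (X.erase 0).max' (Finset.card_pos.mp (by rw [erase_card2 hX h0X]; norm_num)) ≤
      (V.erase 0).max' (Finset.card_pos.mp (by rw [erase_card2 hV h0V]; norm_num)) := by
  have hXe : (X.erase 0).Nonempty := Finset.card_pos.mp (by rw [erase_card2 hX h0X]; norm_num)
  have hVe : (V.erase 0).Nonempty := Finset.card_pos.mp (by rw [erase_card2 hV h0V]; norm_num)
  set a := (X.erase 0).min' hXe with ha
  set b := (X.erase 0).max' hXe with hb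
  set c := (V.erase 0).min' hVe with hc
  set d := (V.erase 0).max' hVe with hd
  have haX : a ∈ X := Finset.mem_of_mem_erase ((X.erase 0).min'_mem hXe)
  have hbX : b ∈ X := Finset.mem_of_mem_erase ((X.erase 0).max'_mem hXe)
  have ha0 : a ≠ 0 := Finset.ne_of_mem_erase ((X.erase 0).min'_mem hXe)
  have hapos : 0 < a := lt_of_le_of_ne (hXnn a haX) (Ne.symm ha0)
  -- every element of V is ≤ d
  have hled : ∀ v ∈ V, v ≤ d := by
    intro v hv
    by_cases hv0 : v = 0
    · subst hv0
      exact le_trans (hVnn d (Finset.mem_of_mem_erase ((V.erase 0).max'_mem hVe)))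
        le_rfl
    · exact Finset.le_max' _ v (Finset.mem_erase.mpr ⟨hv0, hv⟩)
  constructor
  · -- c ≤ a
    have haXX : a ∈ X + X := by
      rw [Finset.mem_add]; exact ⟨a, haX, 0, h0X, by ring⟩
    obtain ⟨v, hv, w, hw, hvw⟩ := Finset.mem_add.mp (heq haXX)
    by_cases hv0 : v = 0
    · subst hv0
      have hw0 : w ≠ 0 := by intro h; subst h; simp at hvw; exact ha0 hvw.symm
      have : c ≤ w := Finset.min'_le _ w (Finset.mem_erase.mpr ⟨hw0, hw⟩)
      omega
    · have : c ≤ v := Finset.min'_le _ v (Finset.mem_erase.mpr ⟨hv0, hv⟩)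
      have := hVnn w hw
      omega
  · -- b ≤ d
    have hbXX : b + b ∈ X + X := by
      rw [Finset.mem_add]; exact ⟨b, hbX, b, hbX, rfl⟩
    obtain ⟨v, hv, w, hw, hvw⟩ := Finset.mem_add.mp (heq hbXX)
    have h1 := hled v hv
    have h2 := hled w hw
    omega

theorem double_sumset_determines (X V : Finset ℤ)
    (hX : X.card = 3) (hV : V.card = 3)
    (h0X : (0 : ℤ) ∈ X) (h0V : (0 : ℤ) ∈ V)
    (hXnn : ∀ x ∈ X, 0 ≤ x) (hVnn : ∀ x ∈ V, 0 ≤ x)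
    (heq : X + X = V + V) : X = V := by
  have hXe : (X.erase 0).Nonempty := Finset.card_pos.mp (by rw [erase_card2 hX h0X]; norm_num)
  have hVe : (V.erase 0).Nonempty := Finset.card_pos.mp (by rw [erase_card2 hV h0V]; norm_num)
  obtain ⟨h1, h2⟩ := le_aux X V hX hV h0X h0V hXnn hVnn (le_of_eq heq)
  obtain ⟨h3, h4⟩ := le_aux V X hV hX h0V h0X hVnn hXnn (le_of_eq heq.symm)
  set a := (X.erase 0).min' hXe with ha
  set b := (X.erase 0).max' hXe with hb
  set c := (V.erase 0).min' hVe with hc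
  set d := (V.erase 0).max' hVe with hd
  have hac : a = c := le_antisymm h3 h1
  have hbd : b = d := le_antisymm h2 h4
  have key : ∀ (S : Finset ℤ), S.card = 3 → (0:ℤ) ∈ S → (∀ x ∈ S, 0 ≤ x) →
      ∀ (hSe : (S.erase 0).Nonempty),
      S = {0, (S.erase 0).min' hSe, (S.erase 0).max' hSe} := by
    intro S hS h0S hSnn hSe
    set p := (S.erase 0).min' hSe
    set q := (S.erase 0).max' hSe
    have hpS : p ∈ S := Finset.mem_of_mem_erase ((S.erase 0).min'_mem hSe)
    have hqS : q ∈ S := Finset.mem_of_mem_erase ((S.erase 0).max'_mem hSe)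
    have hp0 : p ≠ 0 := Finset.ne_of_mem_erase ((S.erase 0).min'_mem hSe)
    have hq0 : q ≠ 0 := Finset.ne_of_mem_erase ((S.erase 0).max'_mem hSe)
    have hpq : p < q := Finset.min'_lt_max'_of_card _ (by rw [erase_card2 hS h0S]; norm_num)
    have hsub : ({0, p, q} : Finset ℤ) ⊆ S := by
      intro x hx
      simp only [Finset.mem_insert, Finset.mem_singleton] at hx
      rcases hx with h | h | h <;> subst h <;> assumption
    have hcard : ({0, p, q} : Finset ℤ).card = 3 := by
      rw [Finset.card_insert_of_notMem (by simp [Ne.symm hp0, Ne.symm hq0]),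
        Finset.card_insert_of_notMem (by simp [hpq.ne]), Finset.card_singleton]
    exact (Finset.eq_of_subset_of_card_le hsub (by rw [hS, hcard])).symm
  rw [key X hX h0X hXnn hXe, key V hV h0V hVnn hVe, ← ha, ← hb, ← hc, ← hd, hac, hbd]
end
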